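/- arXiv:1310.8442 — 6 statements merged into one kernel-verified Lean document; each statement's English description precedes it below -/
import Mathlib

section
/- Let r ≥ 3 and t be integers with t ≥ ⌈(r(r-1)-1)^{r-2} / (r(r-1))^{r-3}⌉. Let H be a {1,r}-graph such that both the order of a maximum complete {1,r}-subgraph of H and the order of a maximum complete {1}-subgraph of H (i.e., the number of singleton edges of H) equal t. Then λ'(H) = λ'(K_t^{{1,r}}) = 1 + (∏_{i=1}^{r-1} (t-i)) / t^{r-1}. -/
open Finset

/-- λ'(H,x) = Σ_{e∈E} |e|! · ∏_{i∈e} x_i  (equals Σ_{j∈R(H)} j!·Σ_{|e|=j} ∏ x_i). -/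
noncomputable def lagPoly {n : ℕ} (E : Finset (Finset (Fin n))) (x : Fin n → ℝ) : ℝ :=
  ∑ e ∈ E, (Nat.factorial e.card : ℝ) * ∏ i ∈ e, x i

/-- A legal weighting: nonnegative entries summing to 1. -/
def isLegal {n : ℕ} (x : Fin n → ℝ) : Prop :=
  (∑ i, x i) = 1 ∧ ∀ i, 0 ≤ x i

/-- The Lagrangian λ'(H): the maximum of λ'(H,x) over legal weightings. -/
noncomputable def lagrangian {n : ℕ} (E : Finset (Finset (Fin n))) : ℝ :=
  sSup {v : ℝ | ∃ x : Fin n → ℝ, isLegal x ∧ lagPoly E x = v}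

/-- Edge set of the complete hypergraph K_t^R on vertex set [t]. -/
def completeEdges (t : ℕ) (R : Finset ℕ) : Finset (Finset (Fin t)) :=
  Finset.univ.filter (fun e => e.card ∈ R)

/-- S induces a complete R-subgraph: every subset of S with cardinality in R is an edge. -/
def isCompleteSub {n : ℕ} (E : Finset (Finset (Fin n))) (R : Finset ℕ) (S : Finset (Fin n)) : Prop :=
  ∀ e ⊆ S, e.card ∈ R → e ∈ E

/-- The maximum complete R-subgraph of H has order t. -/
def maxCompleteOrder {n : ℕ} (E : Finset (Finset (Fin n))) (R : Finset ℕ) (t : ℕ) : Prop :=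
  (∃ S, S.card = t ∧ isCompleteSub E R S) ∧ ∀ S, isCompleteSub E R S → S.card ≤ t

open scoped Nat

/-!
Fix a legal weighting `x` and let `u` be the weight it puts on the set `W` of the `t` vertices
carrying singleton edges. Splitting each `r`-set by its trace on `W`, bounding `j! e_j(x)` on `W`
by Maclaurin's inequality and `(r - j)! e_{r-j}(x)` off `W` by `(1 - u)^(r - j)`, gives
`λ'(H, x) ≤ u + Σ_j a_j B_{r,j}(u)`, where `a_j = t(t-1)⋯(t-j+1) / t^j` and `B_{r,j}` are the
Bernstein polynomials. The bound on `t` makes `j ↦ a_j + j / r` nondecreasing on `[0, r]`, so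
`a_j ≤ 1 + a_r - j / r`, and the Bernstein identities `Σ_j B_{r,j} = 1`, `Σ_j j B_{r,j} = r X`
turn the bound into `1 + a_r`. The uniform weighting of a complete `t`-set attains this value,
both in `H` and in `K_t^{1,r}`.
-/

lemma pow_mul_sub_le_pow_succ (k : ℕ) {p q : ℝ} (hp : 0 ≤ p) (hq : 0 ≤ q) :
    p ^ k * ((k + 1) * q - k * p) ≤ q ^ (k + 1) := by
  rcases hp.eq_or_lt with rfl | hp
  · rcases k with _ | k <;> simp [hq]
  have hbern := one_add_mul_le_pow (a := q / p - 1) (by linarith [div_nonneg hq hp.le]) (k + 1)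
  have hpk : 0 < p ^ (k + 1) := by positivity
  calc p ^ k * ((k + 1) * q - k * p) = p ^ (k + 1) * (1 + ((k + 1 : ℕ) : ℝ) * (q / p - 1)) := by
        field_simp; push_cast; ring
    _ ≤ p ^ (k + 1) * (1 + (q / p - 1)) ^ (k + 1) := mul_le_mul_of_nonneg_left hbern hpk.le
    _ = q ^ (k + 1) := by rw [add_sub_cancel, div_pow, mul_div_cancel₀ _ hpk.ne']

section ElementarySymmetric

variable {ι : Type*} (x : ι → ℝ)

noncomputable def elemSymm (S : Finset ι) (j : ℕ) : ℝ :=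
  ∑ A ∈ S.powersetCard j, ∏ i ∈ A, x i

variable {x}

lemma elemSymm_nonneg (hx : ∀ i, 0 ≤ x i) (S : Finset ι) (j : ℕ) : 0 ≤ elemSymm x S j :=
  sum_nonneg fun _ _ ↦ prod_nonneg fun i _ ↦ hx i

@[simp] lemma elemSymm_zero (S : Finset ι) : elemSymm x S 0 = 1 := by
  simp [elemSymm]

@[simp] lemma elemSymm_empty_succ (k : ℕ) : elemSymm x ∅ (k + 1) = 0 := by
  rw [elemSymm, powersetCard_eq_empty.2 (by simp), sum_empty]

lemma elemSymm_one (S : Finset ι) : elemSymm x S 1 = ∑ i ∈ S, x i := by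
  simp [elemSymm, powersetCard_one]

lemma elemSymm_insert [DecidableEq ι] {a : ι} {S : Finset ι} (ha : a ∉ S) (k : ℕ) :
    elemSymm x (insert a S) (k + 1) = elemSymm x S (k + 1) + x a * elemSymm x S k := by
  have hnotin : ∀ A ∈ S.powersetCard k, a ∉ A := fun A hA h ↦ ha ((mem_powersetCard.1 hA).1 h)
  rw [elemSymm, powersetCard_succ_insert ha, sum_union, sum_image, elemSymm, elemSymm, mul_sum]
  · exact congrArg _ (sum_congr rfl fun A hA ↦ prod_insert (hnotin A hA))
  · intro A hA B hB hAB
    simpa [hnotin A hA, hnotin B hB] using congrArg (Finset.erase · a) hAB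
  · refine disjoint_left.2 fun A hA hA' ↦ ?_
    obtain ⟨B, -, rfl⟩ := mem_image.1 hA'
    exact ha ((mem_powersetCard.1 hA).1 (mem_insert_self a B))

lemma elemSymm_union [DecidableEq ι] {S T : Finset ι} (hST : Disjoint S T) (r : ℕ) :
    elemSymm x (S ∪ T) r = ∑ j ∈ range (r + 1), elemSymm x S j * elemSymm x T (r - j) := by
  induction S using Finset.induction_on generalizing r with
  | empty =>
    rw [sum_range_succ']
    cases r <;> simp
  | @insert a S ha ih =>
    have haT : a ∉ T := disjoint_left.1 hST (mem_insert_self a S)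
    have hST' : Disjoint S T := disjoint_of_subset_left (subset_insert a S) hST
    rcases r with _ | k
    · simp
    rw [insert_union, elemSymm_insert (by simp [ha, haT]), ih hST', ih hST', sum_range_succ',
      sum_range_succ' _ (k + 1)]
    simp only [elemSymm_insert ha, elemSymm_zero, Nat.add_sub_add_right, add_mul, sum_add_distrib,
      mul_sum, mul_assoc]
    abel

lemma sum_prod_le_elemSymm (hx : ∀ i, 0 ≤ x i) {F : Finset (Finset ι)}
    {S : Finset ι} {j : ℕ} (hF : ∀ e ∈ F, e ⊆ S ∧ #e = j) :
    ∑ e ∈ F, ∏ i ∈ e, x i ≤ elemSymm x S j :=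
  sum_le_sum_of_subset_of_nonneg (fun e he ↦ mem_powersetCard.2 (hF e he))
    fun _ _ _ ↦ prod_nonneg fun i _ ↦ hx i

end ElementarySymmetric

-- `j!` times the `j`-th elementary symmetric function of the uniform weighting of an `m`-set,
-- also for `m = 0` (where `0 / 0 = 0` gives `0` for `j > 0`).
noncomputable def descRatio (m j : ℕ) : ℝ := (m.descFactorial j : ℝ) / (m : ℝ) ^ j

lemma descRatio_nonneg (m j : ℕ) : 0 ≤ descRatio m j := by
  unfold descRatio; positivity

lemma descRatio_le_one (m j : ℕ) : descRatio m j ≤ 1 :=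
  div_le_one_of_le₀ (by exact_mod_cast Nat.descFactorial_le_pow m j) (by positivity)

@[simp] lemma descRatio_zero_right (m : ℕ) : descRatio m 0 = 1 := by
  simp [descRatio]

lemma descRatio_one {m : ℕ} (hm : 0 < m) : descRatio m 1 = 1 := by
  have : (m : ℝ) ≠ 0 := by positivity
  simp [descRatio, this]

lemma cast_descFactorial_succ (m j : ℕ) :
    ((m.descFactorial (j + 1) : ℕ) : ℝ) = m.descFactorial j * ((m : ℝ) - j) := by
  simp only [← descPochhammer_eval_eq_descFactorial, descPochhammer_succ_eval]

lemma descRatio_succ (m j : ℕ) : descRatio m (j + 1) = descRatio m j * (((m : ℝ) - j) / m) := by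
  rw [descRatio, descRatio, cast_descFactorial_succ, pow_succ, mul_div_mul_comm]

lemma descRatio_succ_succ (m k : ℕ) :
    descRatio (m + 1) (k + 1) = (m.descFactorial k : ℝ) / ((m : ℝ) + 1) ^ k := by
  have : (m : ℝ) + 1 ≠ 0 := by positivity
  rw [descRatio, Nat.succ_descFactorial_succ, pow_succ]
  push_cast
  field_simp

lemma descRatio_succ_mul_add_le (m k : ℕ) {s v : ℝ} (hs : 0 ≤ s) (hv : 0 ≤ v) :
    descRatio m (k + 1) * s ^ (k + 1) + (k + 1) * v * (descRatio m k * s ^ k)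
      ≤ descRatio (m + 1) (k + 1) * (s + v) ^ (k + 1) := by
  rcases Nat.eq_zero_or_pos m with rfl | hm
  · rcases k with _ | k <;> simp [descRatio, hs]
  -- AM-GM at the averages `s / m` and `(s + v) / (m + 1)` before and after adding a vertex.
  have hm' : (0 : ℝ) < m := by exact_mod_cast hm
  have hD : (0 : ℝ) ≤ m.descFactorial k * (m + 1) := by positivity
  have hm1 : (0 : ℝ) < m + 1 := by positivity
  have hamgm := mul_le_mul_of_nonneg_left (pow_mul_sub_le_pow_succ k (div_nonneg hs hm'.le)
    (div_nonneg (add_nonneg hs hv) hm1.le)) hD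
  rw [descRatio_succ, descRatio_succ_succ]
  unfold descRatio
  calc _ = (m.descFactorial k * (m + 1) : ℝ) * ((s / m) ^ k * ((k + 1) * ((s + v) / (m + 1))
          - k * (s / m))) := by
        rw [div_pow]; field_simp; ring
    _ ≤ _ := hamgm
    _ = _ := by rw [div_pow]; field_simp; ring

section Maclaurin

variable {ι : Type*} {x : ι → ℝ}

theorem factorial_mul_elemSymm_le (hx : ∀ i, 0 ≤ x i) (S : Finset ι) (j : ℕ) :
    (j ! : ℝ) * elemSymm x S j ≤ descRatio #S j * (∑ i ∈ S, x i) ^ j := by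
  classical
  induction S using Finset.induction_on generalizing j with
  | empty => rcases j with _ | j <;> simp
  | @insert a S ha ih =>
    rcases j with _ | k
    · simp
    have hs : 0 ≤ ∑ i ∈ S, x i := sum_nonneg fun i _ ↦ hx i
    rw [elemSymm_insert ha, card_insert_of_notMem ha, sum_insert ha, add_comm (x a)]
    calc ((k + 1)! : ℝ) * (elemSymm x S (k + 1) + x a * elemSymm x S k)
        = (k + 1)! * elemSymm x S (k + 1) + (k + 1) * x a * (k ! * elemSymm x S k) := by
          push_cast [Nat.factorial_succ]; ring
      _ ≤ descRatio #S (k + 1) * (∑ i ∈ S, x i) ^ (k + 1)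
          + (k + 1) * x a * (descRatio #S k * (∑ i ∈ S, x i) ^ k) :=
          add_le_add (ih (k + 1))
            (mul_le_mul_of_nonneg_left (ih k) (mul_nonneg (by positivity) (hx a)))
      _ ≤ _ := descRatio_succ_mul_add_le _ _ hs (hx a)

lemma factorial_mul_elemSymm_le_pow (hx : ∀ i, 0 ≤ x i) (S : Finset ι) (j : ℕ) :
    (j ! : ℝ) * elemSymm x S j ≤ (∑ i ∈ S, x i) ^ j :=
  (factorial_mul_elemSymm_le hx S j).trans <| mul_le_of_le_one_left
    (pow_nonneg (sum_nonneg fun i _ ↦ hx i) j) (descRatio_le_one _ _)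

end Maclaurin

section Coefficients

variable {r t : ℕ}

lemma descRatio_sub_descRatio_succ (ht : 0 < t) (j : ℕ) :
    descRatio t j - descRatio t (j + 1) = j * descRatio t j / t := by
  have : (t : ℝ) ≠ 0 := by positivity
  rw [descRatio_succ]
  field_simp
  ring

lemma mul_descRatio_le (hr : 0 < r) (ht : 0 < t) (hmono : ((r : ℝ) - 2) * (r - 1) ≤ t) {i : ℕ}
    (hi : i ≤ r - 1) : i * descRatio t i ≤ ((r : ℝ) - 1) * descRatio t (r - 1) := by
  have hmon : MonotoneOn (fun i : ℕ ↦ i * descRatio t i) (Set.Iic (r - 1)) := by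
    refine monotoneOn_of_le_add_one Set.ordConnected_Iic fun a _ _ ha ↦ ?_
    have ha' : (a : ℝ) + 2 ≤ r := by
      have : a + 2 ≤ r := by simp only [Set.mem_Iic] at ha; omega
      exact_mod_cast this
    have hta : (a : ℝ) * (a + 1) ≤ t :=
      le_trans (mul_le_mul (by linarith) (by linarith) (by positivity) (by linarith)) hmono
    have ht' : (0 : ℝ) < t := by exact_mod_cast ht
    have hstep : (a + 1) * (descRatio t a * ((t - a) / t)) - a * descRatio t a
        = descRatio t a * (t - a * (a + 1)) / t := by
      field_simp; ring
    push_cast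
    rw [descRatio_succ, ← sub_nonneg, hstep]
    exact div_nonneg (mul_nonneg (descRatio_nonneg t a) (by linarith)) ht'.le
  simpa [Nat.cast_sub hr] using hmon hi (Set.mem_Iic.2 le_rfl) hi

lemma descRatio_le_sub (hr : 0 < r) (ht : 0 < t) (hmono : ((r : ℝ) - 2) * (r - 1) ≤ t)
    (hlast : (r : ℝ) * (r - 1) * descRatio t (r - 1) ≤ t) {j : ℕ} (hj : j ≤ r) :
    descRatio t j ≤ 1 + descRatio t r - (r : ℝ)⁻¹ * j := by
  have hr' : (0 : ℝ) < r := by exact_mod_cast hr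
  have ht' : (0 : ℝ) < t := by exact_mod_cast ht
  -- Each step `descRatio t a - descRatio t (a + 1) = a * descRatio t a / t` is at most `1 / r`.
  have hmon : MonotoneOn (fun i : ℕ ↦ descRatio t i + (r : ℝ)⁻¹ * i) (Set.Iic r) := by
    refine monotoneOn_of_le_add_one Set.ordConnected_Iic fun a _ _ ha ↦ ?_
    have hi := mul_descRatio_le hr ht hmono (i := a) (by simp only [Set.mem_Iic] at ha; omega)
    have hstep : (a : ℝ) * descRatio t a / t ≤ (r : ℝ)⁻¹ := by
      rw [div_le_iff₀ ht', inv_mul_eq_div, le_div_iff₀ hr']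
      nlinarith
    have := descRatio_sub_descRatio_succ ht a
    push_cast
    linarith
  have := hmon (Set.mem_Iic.2 hj) (Set.mem_Iic.2 le_rfl) hj
  simp only [inv_mul_cancel₀ hr'.ne'] at this
  linarith

end Coefficients

lemma bernsteinPolynomial_eval_nonneg (r j : ℕ) {u : ℝ} (hu0 : 0 ≤ u) (hu1 : u ≤ 1) :
    0 ≤ (bernsteinPolynomial ℝ r j).eval u := by
  simp only [bernsteinPolynomial, Polynomial.eval_mul, Polynomial.eval_pow, Polynomial.eval_sub,
    Polynomial.eval_one, Polynomial.eval_X, Polynomial.eval_natCast]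
  have : 0 ≤ 1 - u := by linarith
  positivity

lemma sum_mul_bernsteinPolynomial_le {r : ℕ} {c : ℕ → ℝ} {α β u : ℝ}
    (hc : ∀ j ≤ r, c j ≤ α - β * j) (hu0 : 0 ≤ u) (hu1 : u ≤ 1) :
    ∑ j ∈ range (r + 1), c j * (bernsteinPolynomial ℝ r j).eval u ≤ α - β * r * u := by
  have hsum := congrArg (Polynomial.eval u) (bernsteinPolynomial.sum ℝ r)
  have hmoment := congrArg (Polynomial.eval u) (bernsteinPolynomial.sum_smul ℝ r)
  simp only [Polynomial.eval_finsetSum, nsmul_eq_mul, Polynomial.eval_mul,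
    Polynomial.eval_natCast, Polynomial.eval_one, Polynomial.eval_X] at hsum hmoment
  calc ∑ j ∈ range (r + 1), c j * (bernsteinPolynomial ℝ r j).eval u
      ≤ ∑ j ∈ range (r + 1), (α - β * j) * (bernsteinPolynomial ℝ r j).eval u :=
        sum_le_sum fun j hj ↦ mul_le_mul_of_nonneg_right
          (hc j (Nat.lt_succ_iff.1 (mem_range.1 hj))) (bernsteinPolynomial_eval_nonneg r j hu0 hu1)
    _ = α - β * r * u := by
        simp only [sub_mul, sum_sub_distrib, ← mul_sum, hsum, mul_assoc, hmoment]
        ring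

section Threshold

lemma descRatio_succ_le_pow {t : ℕ} (ht : 0 < t) (k : ℕ) :
    descRatio t (k + 1) ≤ (((t : ℝ) - 1) / t) ^ k := by
  obtain ⟨s, rfl⟩ := Nat.exists_eq_add_of_lt ht
  rw [zero_add, descRatio_succ_succ, div_pow]
  push_cast
  rw [add_sub_cancel_right]
  gcongr
  exact_mod_cast Nat.descFactorial_le_pow s k

lemma sub_le_mul_sub_one_div_pow {q : ℝ} (hq : 1 ≤ q) (k : ℕ) :
    q - k ≤ q * ((q - 1) / q) ^ k := by
  have hq' : 0 < q := by linarith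
  have hbern := one_add_mul_le_pow (a := -q⁻¹) (by linarith [inv_le_one_of_one_le₀ hq]) k
  have h1 : 1 + -q⁻¹ = (q - 1) / q := by field_simp; ring
  calc q - k = q * (1 + k * -q⁻¹) := by field_simp; ring
    _ ≤ q * ((q - 1) / q) ^ k := by rw [← h1]; exact mul_le_mul_of_nonneg_left hbern hq'.le

lemma mul_sub_one_div_pow_le {q t : ℝ} (hq : 0 < q) (ht : 1 ≤ t) (k : ℕ)
    (h : q * ((q - 1) / q) ^ k ≤ t) : q * ((t - 1) / t) ^ k ≤ t := by
  have ht' : 0 < t := by linarith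
  have hbase : 0 ≤ (t - 1) / t := div_nonneg (by linarith) ht'.le
  rcases le_or_gt q t with hqt | htq
  · have : ((t - 1) / t) ^ k ≤ 1 :=
      pow_le_one₀ hbase ((div_le_one ht').2 (by linarith))
    nlinarith
  · have : (t - 1) / t ≤ (q - 1) / q := by
      rw [div_le_div_iff₀ ht' hq]; nlinarith
    calc q * ((t - 1) / t) ^ k ≤ q * ((q - 1) / q) ^ k := by gcongr
      _ ≤ t := h

lemma bounds_of_threshold {r t : ℕ} (hr : 3 ≤ r)
    (ht : ((r : ℝ) * (r - 1) - 1) ^ (r - 2) / ((r : ℝ) * (r - 1)) ^ (r - 3) ≤ t) :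
    0 < t ∧ ((r : ℝ) - 2) * (r - 1) ≤ t ∧ (r : ℝ) * (r - 1) * descRatio t (r - 1) ≤ t := by
  set q : ℝ := r * (r - 1) with hq
  have hr' : (3 : ℝ) ≤ r := by exact_mod_cast hr
  have hq1 : 1 ≤ q := by nlinarith
  have hr2 : ((r - 2 : ℕ) : ℝ) = r - 2 := by push_cast [Nat.cast_sub (by omega : 2 ≤ r)]; ring
  have hthr : q * ((q - 1) / q) ^ (r - 2) ≤ t := by
    have : q ≠ 0 := by linarith
    convert ht using 1
    rw [div_pow, show r - 2 = r - 3 + 1 by omega, pow_succ q]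
    field_simp
  have hlow := (sub_le_mul_sub_one_div_pow hq1 (r - 2)).trans hthr
  rw [hr2] at hlow
  have ht1 : (1 : ℝ) ≤ t := by nlinarith
  refine ⟨by exact_mod_cast ht1, by nlinarith, ?_⟩
  have hdesc := descRatio_succ_le_pow (t := t) (by exact_mod_cast ht1) (r - 2)
  rw [show r - 2 + 1 = r - 1 by omega] at hdesc
  calc q * descRatio t (r - 1) ≤ q * (((t : ℝ) - 1) / t) ^ (r - 2) := by gcongr
    _ ≤ t := mul_sub_one_div_pow_le (by linarith) ht1 _ hthr

end Threshold

lemma factorial_mul_elemSymm_univ_le {n : ℕ} {x : Fin n → ℝ} (hx : isLegal x) (W : Finset (Fin n))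
    (r : ℕ) : (r ! : ℝ) * elemSymm x univ r
      ≤ ∑ j ∈ range (r + 1), descRatio #W j * (bernsteinPolynomial ℝ r j).eval (∑ i ∈ W, x i) := by
  obtain ⟨hsum, hx⟩ := hx
  have hcompl : ∑ i ∈ Wᶜ, x i = 1 - ∑ i ∈ W, x i := by
    rw [← hsum, ← sum_add_sum_compl W x, add_sub_cancel_left]
  rw [← union_compl W, elemSymm_union disjoint_compl_right, mul_sum]
  refine sum_le_sum fun j hj ↦ ?_
  have hjr : j ≤ r := Nat.lt_succ_iff.1 (mem_range.1 hj)
  have hfac : (r ! : ℝ) = r.choose j * j ! * (r - j)! := by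
    exact_mod_cast (Nat.choose_mul_factorial_mul_factorial hjr).symm
  have hW := factorial_mul_elemSymm_le hx W j
  have hWc := factorial_mul_elemSymm_le_pow hx Wᶜ (r - j)
  rw [hcompl] at hWc
  simp only [bernsteinPolynomial, Polynomial.eval_mul, Polynomial.eval_pow, Polynomial.eval_sub,
    Polynomial.eval_one, Polynomial.eval_X, Polynomial.eval_natCast]
  calc (r ! : ℝ) * (elemSymm x W j * elemSymm x Wᶜ (r - j))
      = r.choose j * ((j ! * elemSymm x W j) * ((r - j)! * elemSymm x Wᶜ (r - j))) := by
        rw [hfac]; ring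
    _ ≤ r.choose j * ((descRatio #W j * (∑ i ∈ W, x i) ^ j) * (1 - ∑ i ∈ W, x i) ^ (r - j)) := by
        have hWc0 := elemSymm_nonneg hx Wᶜ (r - j)
        have hu0 : 0 ≤ ∑ i ∈ W, x i := sum_nonneg fun i _ ↦ hx i
        have := descRatio_nonneg #W j
        gcongr
    _ = _ := by ring

section UpperBound

variable {n r t : ℕ}

lemma lagPoly_eq_of_card_eq_one_or {E : Finset (Finset (Fin n))} (hr : r ≠ 1)
    (hcard : ∀ e ∈ E, #e = 1 ∨ #e = r) (x : Fin n → ℝ) :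
    lagPoly E x = ∑ e ∈ E with #e = 1, ∏ i ∈ e, x i + r ! * ∑ e ∈ E with #e = r, ∏ i ∈ e, x i := by
  have hfilter : E.filter (¬ #· = 1) = E.filter (#· = r) :=
    filter_congr fun e he ↦ by rcases hcard e he with h | h <;> simp [h, hr, Ne.symm hr]
  rw [lagPoly, ← sum_filter_add_sum_filter_not E (#· = 1), hfilter, mul_sum]
  congr 1 <;> exact sum_congr rfl fun e he ↦ by simp [(mem_filter.1 he).2]

theorem lagPoly_le_one_add_descRatio (hr : 2 ≤ r) (ht : 0 < t)
    (hmono : ((r : ℝ) - 2) * (r - 1) ≤ t) (hlast : (r : ℝ) * (r - 1) * descRatio t (r - 1) ≤ t)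
    {E : Finset (Finset (Fin n))} (hcard : ∀ e ∈ E, #e = 1 ∨ #e = r) {W : Finset (Fin n)}
    (hW : #W = t) (hsing : ∀ e ∈ E, #e = 1 → e ⊆ W) {x : Fin n → ℝ} (hx : isLegal x) :
    lagPoly E x ≤ 1 + descRatio t r := by
  set u := ∑ i ∈ W, x i
  have hu0 : 0 ≤ u := sum_nonneg fun i _ ↦ hx.2 i
  have hu1 : u ≤ 1 := hx.1 ▸ sum_le_sum_of_subset_of_nonneg (subset_univ W) fun i _ _ ↦ hx.2 i
  have hsingletons : ∑ e ∈ E with #e = 1, ∏ i ∈ e, x i ≤ u :=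
    (sum_prod_le_elemSymm hx.2 fun e he ↦
      ⟨hsing e (mem_filter.1 he).1 (mem_filter.1 he).2, (mem_filter.1 he).2⟩).trans_eq
      (elemSymm_one W)
  have hredges : (r ! : ℝ) * ∑ e ∈ E with #e = r, ∏ i ∈ e, x i ≤ r ! * elemSymm x univ r :=
    mul_le_mul_of_nonneg_left
      (sum_prod_le_elemSymm hx.2 fun e he ↦ ⟨subset_univ e, (mem_filter.1 he).2⟩) (by positivity)
  have hbernstein := hW ▸ factorial_mul_elemSymm_univ_le hx W r
  have hcoeff := sum_mul_bernsteinPolynomial_le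
    (fun j hj ↦ descRatio_le_sub (by omega) ht hmono hlast hj) hu0 hu1
  have hr' : (r : ℝ) ≠ 0 := by positivity
  rw [inv_mul_cancel₀ hr', one_mul] at hcoeff
  rw [lagPoly_eq_of_card_eq_one_or (by omega) hcard]
  linarith

end UpperBound

section UniformWeight

variable {ι : Type*} [DecidableEq ι]

noncomputable def uniformWeight (S : Finset ι) : ι → ℝ :=
  fun i ↦ if i ∈ S then (#S : ℝ)⁻¹ else 0

lemma isLegal_uniformWeight {n : ℕ} {S : Finset (Fin n)} (hS : S.Nonempty) :
    isLegal (uniformWeight S) := by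
  refine ⟨?_, fun i ↦ by unfold uniformWeight; split_ifs <;> positivity⟩
  have : (#S : ℝ) ≠ 0 := by exact_mod_cast hS.card_pos.ne'
  simp [uniformWeight, sum_ite_mem, this]

lemma sum_powersetCard_factorial_mul_prod_uniformWeight (S : Finset ι) (j : ℕ) :
    ∑ e ∈ S.powersetCard j, ((#e)! : ℝ) * ∏ i ∈ e, uniformWeight S i = descRatio #S j := by
  have hterm : ∀ e ∈ S.powersetCard j, ((#e)! : ℝ) * ∏ i ∈ e, uniformWeight S i
      = j ! * ((#S : ℝ)⁻¹) ^ j := by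
    intro e he
    obtain ⟨heS, rfl⟩ := mem_powersetCard.1 he
    rw [← prod_const]
    exact congrArg _ (prod_congr rfl fun i hi ↦ if_pos (heS hi))
  rw [sum_congr rfl hterm, sum_const, card_powersetCard, nsmul_eq_mul, descRatio,
    Nat.descFactorial_eq_factorial_mul_choose]
  push_cast
  ring

end UniformWeight

section Lagrangian

variable {n r t : ℕ}

lemma lagrangian_eq_of_forall_le {E : Finset (Finset (Fin n))} {c : ℝ}
    (hle : ∀ x, isLegal x → lagPoly E x ≤ c) {x₀ : Fin n → ℝ} (hx₀ : isLegal x₀)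
    (hval : lagPoly E x₀ = c) : lagrangian E = c :=
  IsGreatest.csSup_eq ⟨⟨x₀, hx₀, hval⟩, by rintro _ ⟨x, hx, rfl⟩; exact hle x hx⟩

lemma lagPoly_uniformWeight {E : Finset (Finset (Fin n))} (hr : r ≠ 1)
    (hcard : ∀ e ∈ E, #e = 1 ∨ #e = r) {S : Finset (Fin n)} (hS : S.Nonempty)
    (hSc : isCompleteSub E {1, r} S) :
    lagPoly E (uniformWeight S) = 1 + descRatio #S r := by
  have hsupp : ∀ e ∈ E, ((#e)! : ℝ) * ∏ i ∈ e, uniformWeight S i ≠ 0 → e ⊆ S := by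
    intro e _ hne i hi
    by_contra hiS
    exact hne (by rw [prod_eq_zero hi (if_neg hiS), mul_zero])
  have hedges : E.filter (· ⊆ S) = S.powersetCard 1 ∪ S.powersetCard r := by
    ext e
    simp only [mem_filter, mem_union, mem_powersetCard]
    constructor
    · rintro ⟨he, heS⟩
      rcases hcard e he with h | h
      exacts [Or.inl ⟨heS, h⟩, Or.inr ⟨heS, h⟩]
    · rintro (⟨heS, h⟩ | ⟨heS, h⟩) <;> exact ⟨hSc e heS (by simp [h]), heS⟩
  rw [lagPoly, ← sum_filter_of_ne hsupp, hedges,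
    sum_union (pairwise_disjoint_powersetCard S (Ne.symm hr)),
    sum_powersetCard_factorial_mul_prod_uniformWeight,
    sum_powersetCard_factorial_mul_prod_uniformWeight, descRatio_one hS.card_pos]

theorem lagrangian_eq_one_add_descRatio (hr : 2 ≤ r) (ht : 0 < t)
    (hmono : ((r : ℝ) - 2) * (r - 1) ≤ t) (hlast : (r : ℝ) * (r - 1) * descRatio t (r - 1) ≤ t)
    {E : Finset (Finset (Fin n))} (hcard : ∀ e ∈ E, #e = 1 ∨ #e = r) {W : Finset (Fin n)}
    (hW : #W = t) (hsing : ∀ e ∈ E, #e = 1 → e ⊆ W) {S : Finset (Fin n)} (hS : #S = t)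
    (hSc : isCompleteSub E {1, r} S) :
    lagrangian E = 1 + descRatio t r := by
  have hSne : S.Nonempty := card_pos.1 (hS ▸ ht)
  exact lagrangian_eq_of_forall_le
    (fun x hx ↦ lagPoly_le_one_add_descRatio hr ht hmono hlast hcard hW hsing hx)
    (isLegal_uniformWeight hSne) (hS ▸ lagPoly_uniformWeight (by omega) hcard hSne hSc)

lemma lagrangian_completeEdges (hr : 2 ≤ r) (ht : 0 < t)
    (hmono : ((r : ℝ) - 2) * (r - 1) ≤ t) (hlast : (r : ℝ) * (r - 1) * descRatio t (r - 1) ≤ t) :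
    lagrangian (completeEdges t {1, r}) = 1 + descRatio t r := by
  have hcard : ∀ e ∈ completeEdges t {1, r}, #e = 1 ∨ #e = r := by
    simp [completeEdges]
  exact lagrangian_eq_one_add_descRatio hr ht hmono hlast hcard (W := univ) (by simp)
    (fun e _ _ ↦ subset_univ e) (S := univ) (by simp)
    (fun e _ he ↦ by simpa [completeEdges] using he)

lemma card_singletons_eq_of_maxCompleteOrder {E : Finset (Finset (Fin n))}
    (h : maxCompleteOrder E {1} t) :
    #{v | {v} ∈ E} = t := by
  obtain ⟨⟨S, hS, hSc⟩, hmax⟩ := h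
  refine le_antisymm (hmax _ fun e he h1 ↦ ?_) (hS ▸ card_le_card fun v hv ↦ ?_)
  · obtain ⟨v, rfl⟩ := card_eq_one.1 (mem_singleton.1 h1)
    exact (mem_filter.1 (he (mem_singleton_self v))).2
  · exact mem_filter.2 ⟨mem_univ v, hSc {v} (singleton_subset_iff.2 hv) (by simp)⟩

lemma descRatio_eq_prod_Icc (ht : 0 < t) (hr : 0 < r) :
    descRatio t r = (∏ i ∈ Icc 1 (r - 1), ((t : ℝ) - i)) / (t : ℝ) ^ (r - 1) := by
  obtain ⟨k, rfl⟩ := Nat.exists_eq_add_of_lt hr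
  have : (t : ℝ) ≠ 0 := by positivity
  rw [descRatio, ← descPochhammer_eval_eq_descFactorial, descPochhammer_eval_eq_prod_range,
    zero_add, prod_range_succ', Nat.add_sub_cancel, pow_succ, range_eq_Ico,
    prod_Ico_add' (fun i : ℕ ↦ (t : ℝ) - i), zero_add, Ico_add_one_right_eq_Icc]
  push_cast
  field_simp
  ring

end Lagrangian

/-- Motzkin–Straus type theorem for {1,r}-graphs (Theorem 6 of the paper). -/
theorem lagrangian_one_r_graph (r t n : ℕ) (hr : 3 ≤ r)
    (ht : (⌈((r : ℝ) * ((r : ℝ) - 1) - 1) ^ (r - 2) / ((r : ℝ) * ((r : ℝ) - 1)) ^ (r - 3)⌉ : ℤ)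
      ≤ (t : ℤ))
    (E : Finset (Finset (Fin n)))
    (hR : E.image Finset.card = ({1, r} : Finset ℕ))
    (hmax1r : maxCompleteOrder E ({1, r} : Finset ℕ) t)
    (hmax1 : maxCompleteOrder E ({1} : Finset ℕ) t) :
    lagrangian E = lagrangian (completeEdges t ({1, r} : Finset ℕ)) ∧
    lagrangian (completeEdges t ({1, r} : Finset ℕ)) =
      1 + (∏ i ∈ Finset.Icc 1 (r - 1), ((t : ℝ) - (i : ℝ))) / (t : ℝ) ^ (r - 1) := by
  obtain ⟨ht0, hmono, hlast⟩ := bounds_of_threshold hr (by exact_mod_cast Int.ceil_le.1 ht)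
  have hcard : ∀ e ∈ E, #e = 1 ∨ #e = r := fun e he ↦ by
    simpa [hR] using mem_image_of_mem Finset.card he
  have hsing : ∀ e ∈ E, #e = 1 → e ⊆ ({v | {v} ∈ E} : Finset (Fin n)) := by
    intro e he h1
    obtain ⟨v, rfl⟩ := card_eq_one.1 h1
    simpa using he
  obtain ⟨⟨S, hS, hSc⟩, -⟩ := hmax1r
  have hK := lagrangian_completeEdges (by omega) ht0 hmono hlast
  refine ⟨?_, by rw [hK, descRatio_eq_prod_Icc ht0 (by omega)]⟩
  rw [hK, lagrangian_eq_one_add_descRatio (by omega) ht0 hmono hlast hcard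
    (card_singletons_eq_of_maxCompleteOrder hmax1) hsing hS hSc]
end

section
/- Let t ≥ 8 be an integer and let H be a {1,2,3}-graph such that both the order of a maximum complete {1,2,3}-subgraph of H and the order of a maximum complete {1}-subgraph of H (i.e., the number of singleton edges of H) equal t. Then λ'(H) = λ'(K_t^{{1,2,3}}) = 1 + (t-1)/t + (t-1)(t-2)/t². -/
/-!
Let `V₁` be the set of vertices carrying a singleton edge, `c = 1 / t` and `a = ∑_{i ∈ V₁} xᵢ`.
On a legal weighting `x`, `λ'(H, x) ≤ a + 2 e₂(x) + 6 e₃(x) = a + 2 - ∑ᵢ (4 xᵢ² - 2 xᵢ³)` by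
Newton's identities. Bounding `4 y² - 2 y³` below by its tangent at `c` on `V₁` and by `0`
elsewhere, and using `|V₁| ≤ t`, gives `λ'(H, x) ≤ 3 - 4 c + 2 c² - (1 - a) (1 - 8 c + 6 c²)`,
where `1 - 8 c + 6 c² ≥ 0` because `t ≥ 8`. The uniform weighting on a complete
`{1, 2, 3}`-subgraph of order `t` attains `3 - 4 c + 2 c²`, which is the value of `λ'(K_t^{1,2,3})`.
-/

open Finset

namespace Multiset

section CommSemiring

variable {R : Type*} [CommSemiring R]

lemma esymm_cons_succ (a : R) (s : Multiset R) (k : ℕ) :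
    (a ::ₘ s).esymm (k + 1) = s.esymm (k + 1) + a * s.esymm k := by
  simp [esymm, powersetCard_cons, sum_map_mul_left]

lemma esymm_one (s : Multiset R) : s.esymm 1 = s.sum := by
  simp [esymm, powersetCard_one]

end CommSemiring

variable {R : Type*} [CommRing R]

lemma two_mul_esymm_two (s : Multiset R) :
    2 * s.esymm 2 = s.sum ^ 2 - (s.map (· ^ 2)).sum := by
  induction s using Multiset.induction_on with
  | empty => simp [esymm, powersetCard_zero_right]
  | cons a s ih =>
    rw [esymm_cons_succ, esymm_one, sum_cons, map_cons, sum_cons]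
    linear_combination ih

lemma six_mul_esymm_three (s : Multiset R) :
    6 * s.esymm 3 = s.sum ^ 3 - 3 * s.sum * (s.map (· ^ 2)).sum + 2 * (s.map (· ^ 3)).sum := by
  induction s using Multiset.induction_on with
  | empty => simp [esymm, powersetCard_zero_right]
  | cons a s ih =>
    rw [esymm_cons_succ, map_cons, map_cons, sum_cons, sum_cons, sum_cons]
    linear_combination ih + 3 * a * two_mul_esymm_two s

end Multiset

lemma tangent_le_four_mul_sq_sub_two_mul_cube {y c : ℝ} (hy : y ≤ 1) (hc : c ≤ 1 / 2) :
    4 * c ^ 2 - 2 * c ^ 3 + (8 * c - 6 * c ^ 2) * (y - c) ≤ 4 * y ^ 2 - 2 * y ^ 3 := by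
  nlinarith [mul_nonneg (sq_nonneg (y - c)) (show 0 ≤ 4 - 4 * c - 2 * y by linarith)]

lemma sum_four_mul_sq_sub_two_mul_cube_ge {ι : Type*} [Fintype ι] {x : ι → ℝ}
    (hx1 : ∀ i, x i ≤ 1) (V : Finset ι) {c : ℝ} (hc0 : 0 ≤ c)
    (hc : c ≤ 1 / 2) (hV : #V * c ≤ 1) :
    (8 * c - 6 * c ^ 2) * ∑ i ∈ V, x i - 4 * c * (1 - c) ≤ ∑ i, (4 * x i ^ 2 - 2 * x i ^ 3) :=
  calc (8 * c - 6 * c ^ 2) * ∑ i ∈ V, x i - 4 * c * (1 - c)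
      ≤ ∑ i ∈ V, (4 * c ^ 2 - 2 * c ^ 3 + (8 * c - 6 * c ^ 2) * (x i - c)) := by
        simp only [sum_add_distrib, ← mul_sum, sum_sub_distrib, sum_const, nsmul_eq_mul]
        nlinarith [mul_le_mul_of_nonneg_right hV (by nlinarith : 0 ≤ c * (1 - c))]
    _ ≤ ∑ i ∈ V, (4 * x i ^ 2 - 2 * x i ^ 3) :=
        sum_le_sum fun i _ => tangent_le_four_mul_sq_sub_two_mul_cube (hx1 i) hc
    _ ≤ ∑ i, (4 * x i ^ 2 - 2 * x i ^ 3) :=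
        sum_le_sum_of_subset_of_nonneg (subset_univ V) fun i _ _ => by
          nlinarith [mul_nonneg (sq_nonneg (x i)) (by linarith [hx1 i] : 0 ≤ 2 - x i)]

section Lagrangian

variable {n : ℕ}

def singletonVertices (E : Finset (Finset (Fin n))) : Finset (Fin n) :=
  univ.filter fun i => {i} ∈ E

lemma isCompleteSub_singletonVertices (E : Finset (Finset (Fin n))) :
    isCompleteSub E {1} (singletonVertices E) := fun e he he1 => by
  obtain ⟨i, rfl⟩ := card_eq_one.1 (mem_singleton.1 he1)
  simpa [singletonVertices] using he (mem_singleton_self i)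

lemma lagPoly_mono {E F : Finset (Finset (Fin n))} (h : E ⊆ F) {x : Fin n → ℝ}
    (hx : ∀ i, 0 ≤ x i) : lagPoly E x ≤ lagPoly F x :=
  sum_le_sum_of_subset_of_nonneg h fun _ _ _ =>
    mul_nonneg (Nat.cast_nonneg _) (prod_nonneg fun i _ => hx i)

lemma lagPoly_union {E F : Finset (Finset (Fin n))} (h : Disjoint E F) (x : Fin n → ℝ) :
    lagPoly (E ∪ F) x = lagPoly E x + lagPoly F x :=
  sum_union h

lemma lagPoly_powersetCard (s : Finset (Fin n)) (k : ℕ) (x : Fin n → ℝ) :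
    lagPoly (s.powersetCard k) x = k.factorial * (s.val.map x).esymm k := by
  rw [lagPoly, esymm_map_val, mul_sum]
  exact sum_congr rfl fun e he => by rw [(mem_powersetCard.1 he).2]

lemma subset_powersetCard_one_union {E : Finset (Finset (Fin n))}
    (hE : ∀ e ∈ E, e.card ∈ ({1, 2, 3} : Finset ℕ)) :
    E ⊆ (singletonVertices E).powersetCard 1 ∪ (univ.powersetCard 2 ∪ univ.powersetCard 3) := by
  intro e he
  simp only [mem_union, mem_powersetCard_univ]
  rcases mem_insert.1 (hE e he) with h | h
  · obtain ⟨i, rfl⟩ := card_eq_one.1 h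
    exact Or.inl (mem_powersetCard.2 ⟨by simpa [singletonVertices] using he, h⟩)
  · exact Or.inr (by simpa using h)

lemma lagPoly_le_of_card_mem {E : Finset (Finset (Fin n))}
    (hE : ∀ e ∈ E, e.card ∈ ({1, 2, 3} : Finset ℕ)) {x : Fin n → ℝ} (hx : ∀ i, 0 ≤ x i) :
    lagPoly E x ≤ ∑ i ∈ singletonVertices E, x i + 2 * (univ.val.map x).esymm 2
      + 6 * (univ.val.map x).esymm 3 := by
  have hdisj : ∀ {s t : Finset (Fin n)} {k l : ℕ}, k ≠ l →
      Disjoint (s.powersetCard k) (t.powersetCard l) := fun hkl =>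
    disjoint_left.2 fun e hs ht => hkl ((mem_powersetCard.1 hs).2 ▸ (mem_powersetCard.1 ht).2)
  calc lagPoly E x ≤ _ := lagPoly_mono (subset_powersetCard_one_union hE) hx
    _ = _ := by
      rw [lagPoly_union (disjoint_union_right.2 ⟨hdisj (by decide), hdisj (by decide)⟩),
        lagPoly_union (hdisj (by decide)), lagPoly_powersetCard, lagPoly_powersetCard,
        lagPoly_powersetCard, Multiset.esymm_one, sum_map_val]
      norm_num [Nat.factorial]
      ring

lemma isLegal.le_one {x : Fin n → ℝ} (hx : isLegal x) (i : Fin n) : x i ≤ 1 :=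
  hx.1 ▸ single_le_sum (fun j _ => hx.2 j) (mem_univ i)

lemma lagPoly_le_of_card_singletonVertices_le {t : ℕ} (ht : 8 ≤ t) {E : Finset (Finset (Fin n))}
    (hE : ∀ e ∈ E, e.card ∈ ({1, 2, 3} : Finset ℕ)) (hV : #(singletonVertices E) ≤ t)
    {x : Fin n → ℝ} (hx : isLegal x) :
    lagPoly E x ≤ 1 + ((t : ℝ) - 1) / (t : ℝ) + ((t : ℝ) - 1) * ((t : ℝ) - 2) / (t : ℝ) ^ 2 := by
  have hT : (8 : ℝ) ≤ t := by exact_mod_cast ht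
  have hvalue : 1 + ((t : ℝ) - 1) / t + ((t : ℝ) - 1) * (t - 2) / t ^ 2 =
      3 - 4 * (t : ℝ)⁻¹ + 2 * (t : ℝ)⁻¹ ^ 2 := by
    field_simp
    ring
  set c : ℝ := (t : ℝ)⁻¹
  have hc0 : 0 ≤ c := by positivity
  have hc : c ≤ 1 / 8 := by rw [inv_le_comm₀] <;> linarith
  have hVc : #(singletonVertices E) * c ≤ 1 := by
    rw [← div_eq_mul_inv, div_le_one (by linarith)]
    exact_mod_cast hV
  set a := ∑ i ∈ singletonVertices E, x i
  have ha : a ≤ 1 := hx.1 ▸ sum_le_sum_of_subset_of_nonneg (subset_univ _) fun i _ _ => hx.2 i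
  have hpow := sum_four_mul_sq_sub_two_mul_cube_ge hx.le_one (singletonVertices E) hc0
    (by linarith) hVc
  have h2 := Multiset.two_mul_esymm_two (univ.val.map x)
  have h3 := Multiset.six_mul_esymm_three (univ.val.map x)
  simp only [Multiset.map_map, Function.comp_def, sum_map_val, hx.1] at h2 h3
  rw [hvalue]
  simp only [sum_sub_distrib, ← mul_sum] at hpow
  nlinarith [lagPoly_le_of_card_mem hE hx.2,
    mul_nonneg (sub_nonneg.2 ha) (by nlinarith : 0 ≤ 1 - 8 * c + 6 * c ^ 2)]

noncomputable def uniformWeighting (S : Finset (Fin n)) : Fin n → ℝ :=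
  fun i => if i ∈ S then (#S : ℝ)⁻¹ else 0

lemma isLegal_uniformWeighting {S : Finset (Fin n)} (hS : S.Nonempty) :
    isLegal (uniformWeighting S) := by
  refine ⟨?_, fun i => by unfold uniformWeighting; positivity⟩
  unfold uniformWeighting
  rw [sum_ite_mem, univ_inter, sum_const, nsmul_eq_mul,
    mul_inv_cancel₀ (by simpa using hS.card_pos.ne')]

lemma prod_uniformWeighting (S e : Finset (Fin n)) :
    ∏ i ∈ e, uniformWeighting S i = if e ⊆ S then (#S : ℝ)⁻¹ ^ #e else 0 := by
  split_ifs with he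
  · exact prod_eq_pow_card fun i hi => if_pos (he hi)
  · obtain ⟨i, hi, hiS⟩ := not_subset.1 he
    exact prod_eq_zero hi (if_neg hiS)

lemma lagPoly_uniformWeighting {E : Finset (Finset (Fin n))} {R : Finset ℕ}
    (hE : ∀ e ∈ E, e.card ∈ R) {S : Finset (Fin n)} (hS : isCompleteSub E R S) :
    lagPoly E (uniformWeighting S) = ∑ k ∈ R, ((#S).descFactorial k : ℝ) / (#S : ℝ) ^ k := by
  have hsub : E.filter (· ⊆ S) = S.powerset.filter (#· ∈ R) := by
    ext e
    simp only [mem_filter, mem_powerset]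
    exact ⟨fun h => ⟨h.2, hE e h.1⟩, fun h => ⟨hS e h.1 h.2, h.1⟩⟩
  calc lagPoly E (uniformWeighting S)
      = ∑ e ∈ S.powerset.filter (#· ∈ R), (#e).factorial * (#S : ℝ)⁻¹ ^ #e := by
        simp only [lagPoly, prod_uniformWeighting, mul_ite, mul_zero, ← sum_filter, hsub]
    _ = ∑ k ∈ R, ∑ e ∈ S.powersetCard k, (#e).factorial * (#S : ℝ)⁻¹ ^ #e := by
        rw [← sum_fiberwise_of_maps_to (g := card) fun e he => (mem_filter.1 he).2]
        refine sum_congr rfl fun k hk => sum_congr ?_ fun _ _ => rfl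
        rw [powersetCard_eq_filter, filter_filter]
        exact filter_congr fun e _ => ⟨fun h => h.2, fun h => ⟨h ▸ hk, h⟩⟩
    _ = _ := by
        refine sum_congr rfl fun k _ => ?_
        rw [sum_congr rfl fun e he => by rw [(mem_powersetCard.1 he).2], sum_const,
          card_powersetCard, nsmul_eq_mul, Nat.descFactorial_eq_factorial_mul_choose]
        push_cast
        ring

lemma sum_descFactorial_div_pow_one_two_three {t : ℕ} (ht : t ≠ 0) :
    ∑ k ∈ ({1, 2, 3} : Finset ℕ), (t.descFactorial k : ℝ) / (t : ℝ) ^ k =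
      1 + ((t : ℝ) - 1) / (t : ℝ) + ((t : ℝ) - 1) * ((t : ℝ) - 2) / (t : ℝ) ^ 2 := by
  rw [sum_insert (by decide), sum_insert (by decide), sum_singleton]
  obtain _ | _ | m := t
  · contradiction
  · norm_num
  · simp only [Nat.descFactorial_succ, Nat.descFactorial_zero]
    push_cast [show m + 2 - 2 = m by omega, show m + 2 - 1 = m + 1 by omega]
    field_simp
    ring

lemma lagrangian_eq_of_completeSub {t : ℕ} (ht : 8 ≤ t) {E : Finset (Finset (Fin n))}
    (hE : ∀ e ∈ E, e.card ∈ ({1, 2, 3} : Finset ℕ)) (hV : #(singletonVertices E) ≤ t)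
    {S : Finset (Fin n)} (hS : #S = t) (hSE : isCompleteSub E {1, 2, 3} S) :
    lagrangian E =
      1 + ((t : ℝ) - 1) / (t : ℝ) + ((t : ℝ) - 1) * ((t : ℝ) - 2) / (t : ℝ) ^ 2 := by
  refine IsGreatest.csSup_eq ⟨⟨uniformWeighting S, ?_, ?_⟩, ?_⟩
  · exact isLegal_uniformWeighting (card_pos.1 (by omega))
  · rw [lagPoly_uniformWeighting hE hSE, hS, sum_descFactorial_div_pow_one_two_three (by omega)]
  · rintro _ ⟨x, hx, rfl⟩
    exact lagPoly_le_of_card_singletonVertices_le ht hE hV hx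

end Lagrangian

/-- Motzkin–Straus type theorem for {1,2,3}-graphs (Theorem 18 of the paper). -/
theorem lagrangian_one_two_three_graph (t n : ℕ) (ht : 8 ≤ t)
    (E : Finset (Finset (Fin n)))
    (hR : E.image Finset.card = ({1, 2, 3} : Finset ℕ))
    (hmax123 : maxCompleteOrder E ({1, 2, 3} : Finset ℕ) t)
    (hmax1 : maxCompleteOrder E ({1} : Finset ℕ) t) :
    lagrangian E = lagrangian (completeEdges t ({1, 2, 3} : Finset ℕ)) ∧
    lagrangian (completeEdges t ({1, 2, 3} : Finset ℕ)) =
      1 + ((t : ℝ) - 1) / (t : ℝ) + ((t : ℝ) - 1) * ((t : ℝ) - 2) / (t : ℝ) ^ 2 := by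
  have hK : lagrangian (completeEdges t ({1, 2, 3} : Finset ℕ)) =
      1 + ((t : ℝ) - 1) / (t : ℝ) + ((t : ℝ) - 1) * ((t : ℝ) - 2) / (t : ℝ) ^ 2 :=
    lagrangian_eq_of_completeSub ht (fun e he => (mem_filter.1 he).2)
      ((card_le_univ _).trans_eq (Fintype.card_fin t)) (card_fin t)
      fun e _ he => mem_filter.2 ⟨mem_univ e, he⟩
  refine ⟨?_, hK⟩
  obtain ⟨S, hS, hSE⟩ := hmax123.1
  rw [hK, lagrangian_eq_of_completeSub ht (fun e he => hR ▸ mem_image_of_mem card he)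
    (hmax1.2 _ (isCompleteSub_singletonVertices E)) hS hSE]
end

section
/- Let H = ([n], E) be a hypergraph on vertex set [n]={1,…,n}, let i < j be vertices in [n], and let x = (x_1,…,x_n) be an optimal legal weighting for H with x_1 ≥ x_2 ≥ … ≥ x_n ≥ 0. Let H_{ij} = ([n], 𝓛_{ij}(E)) be the hypergraph obtained by the (i,j)-compression of E. Then λ'(H, x) ≤ λ'(H_{ij}, x). -/
open Finset

/-- The (i,j)-compression of a single edge: replace j by i if i∉e and j∈e. -/
def Lij {n : ℕ} (i j : Fin n) (e : Finset (Fin n)) : Finset (Fin n) :=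
  if i ∉ e ∧ j ∈ e then insert i (e.erase j) else e

/-- The compressed edge set 𝓛_{ij}(E) = {L_{ij}(e) : e∈E} ∪ {e ∈ E : L_{ij}(e) ∈ E}. -/
def compress {n : ℕ} (i j : Fin n) (E : Finset (Finset (Fin n))) : Finset (Finset (Fin n)) :=
  E.image (Lij i j) ∪ E.filter (fun e => Lij i j e ∈ E)

/-! Moving `j` to `i` in an edge keeps its size and replaces the factor `x_j` of its product by
`x_i ≥ x_j`, so no edge loses weight. The edges of `E` whose image is again in `E` survive the
compression, and `L_{ij}` maps the remaining ones injectively (moving `i` back to `j` inverts it)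
onto the new edges; hence the sum over `𝓛_{ij}(E)` dominates the sum over `E`. -/

section Compression

variable {n : ℕ} {i j : Fin n}

lemma Lij_eq_self {e : Finset (Fin n)} (h : ¬(i ∉ e ∧ j ∈ e)) : Lij i j e = e :=
  if_neg h

lemma Lij_Lij (e : Finset (Fin n)) : Lij i j (Lij i j e) = Lij i j e := by
  by_cases h : i ∉ e ∧ j ∈ e
  · have hL : Lij i j e = insert i (e.erase j) := if_pos h
    rw [hL]
    exact Lij_eq_self (by simp)
  · rw [Lij_eq_self h, Lij_eq_self h]

lemma card_Lij (e : Finset (Fin n)) : (Lij i j e).card = e.card := by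
  by_cases h : i ∉ e ∧ j ∈ e
  · rw [Lij, if_pos h, card_insert_of_notMem (by simp [h.1]), card_erase_add_one h.2]
  · rw [Lij_eq_self h]

lemma Lij_injOn : Set.InjOn (Lij i j) {e | Lij i j e ≠ e} := by
  have hmoved : ∀ e, Lij i j e ≠ e → insert j ((Lij i j e).erase i) = e := by
    intro e he
    have h : i ∉ e ∧ j ∈ e := by_contra fun h => he (Lij_eq_self h)
    rw [Lij, if_pos h, erase_insert (by simp [h.1]), insert_erase h.2]
  intro a ha b hb hab
  rw [← hmoved a ha, ← hmoved b hb, hab]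

lemma compress_eq_union (E : Finset (Finset (Fin n))) :
    compress i j E =
      E.filter (fun e => Lij i j e ∈ E) ∪ (E.filter (fun e => Lij i j e ∉ E)).image (Lij i j) := by
  ext g
  simp only [compress, mem_union, mem_image, mem_filter]
  constructor
  · rintro (⟨e, he, rfl⟩ | hg)
    · by_cases hLe : Lij i j e ∈ E
      · exact Or.inl ⟨hLe, by rwa [Lij_Lij]⟩
      · exact Or.inr ⟨e, ⟨he, hLe⟩, rfl⟩
    · exact Or.inl hg
  · rintro (hg | ⟨e, ⟨he, -⟩, rfl⟩)
    · exact Or.inr hg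
    · exact Or.inl ⟨e, he, rfl⟩

lemma sum_le_sum_compress {M : Type*} [AddCommMonoid M] [PartialOrder M] [IsOrderedAddMonoid M]
    (E : Finset (Finset (Fin n))) (f : Finset (Fin n) → M)
    (hf : ∀ e ∈ E, f e ≤ f (Lij i j e)) :
    ∑ e ∈ E, f e ≤ ∑ e ∈ compress i j E, f e := by
  set S := E.filter (fun e => Lij i j e ∈ E)
  set T := E.filter (fun e => Lij i j e ∉ E)
  have hdisj : Disjoint S (T.image (Lij i j)) := by
    simp only [S, T, disjoint_right, mem_image, mem_filter]
    rintro _ ⟨e, ⟨-, hLe⟩, rfl⟩ ⟨hLe', -⟩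
    exact hLe hLe'
  have hmoved : ∀ e ∈ T, Lij i j e ≠ e := by
    intro e he hLe
    obtain ⟨he, hLe'⟩ := mem_filter.mp he
    rw [hLe] at hLe'
    exact hLe' he
  have hinj : Set.InjOn (Lij i j) T := fun a ha b hb =>
    Lij_injOn (hmoved a ha) (hmoved b hb)
  calc ∑ e ∈ E, f e = ∑ e ∈ S, f e + ∑ e ∈ T, f e := (sum_filter_add_sum_filter_not _ _ _).symm
    _ ≤ ∑ e ∈ S, f e + ∑ e ∈ T, f (Lij i j e) :=
        add_le_add_right (sum_le_sum fun e he => hf e (mem_filter.mp he).1) _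
    _ = ∑ e ∈ compress i j E, f e := by
        rw [compress_eq_union, sum_union hdisj, sum_image hinj]

lemma prod_le_prod_Lij {x : Fin n → ℝ} (hx : ∀ k, 0 ≤ x k) (hxij : x j ≤ x i)
    (e : Finset (Fin n)) : ∏ k ∈ e, x k ≤ ∏ k ∈ Lij i j e, x k := by
  by_cases h : i ∉ e ∧ j ∈ e
  · rw [Lij, if_pos h, prod_insert (by simp [h.1]), ← mul_prod_erase e x h.2]
    exact mul_le_mul_of_nonneg_right hxij (prod_nonneg fun k _ => hx k)
  · rw [Lij_eq_self h]

end Compression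

theorem lagPoly_le_compress_general (n : ℕ) (E : Finset (Finset (Fin n))) (i j : Fin n) (hij : i < j)
    (x : Fin n → ℝ) (hx : isLegal x)
    (hmono : ∀ a b : Fin n, a ≤ b → x b ≤ x a) :
    lagPoly E x ≤ lagPoly (compress i j E) x := by
  refine sum_le_sum_compress E _ fun e _ => ?_
  rw [card_Lij]
  exact mul_le_mul_of_nonneg_left (prod_le_prod_Lij hx.2 (hmono i j hij.le) e) (by positivity)

/-- Lemma 10 of the paper: compression does not decrease λ'(·, x) at an ordered optimal
legal weighting. -/
theorem lagPoly_le_compress (n : ℕ) (E : Finset (Finset (Fin n))) (i j : Fin n) (hij : i < j)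
    (x : Fin n → ℝ) (hx : isLegal x)
    (hmono : ∀ a b : Fin n, a ≤ b → x b ≤ x a)
    (hopt : lagPoly E x = lagrangian E) :
    lagPoly E x ≤ lagPoly (compress i j E) x :=
  lagPoly_le_compress_general n E i j hij x hx hmono
end

section
/- For all integers t ≥ 1 and r ≥ 2, the Lagrangian of the complete {1,r}-graph on t vertices satisfies λ'(K_t^{{1,r}}) = 1 + (∏_{i=1}^{r-1} (t-i)) / t^{r-1}, and this value is attained by the uniform weighting assigning weight 1/t to each of the t vertices. -/
/-!
On a weighting `x`, `λ'(K_t^{1,r}, x) = ∑ xᵢ + r! · e_r(x)` with `e_r` the `r`-th elementary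
symmetric polynomial, so on the simplex one has to maximise `e_r`. Replacing two unequal
coordinates `x_a, x_b` by their mean keeps `∑ xᵢ`, does not decrease `e_r` (only the term
`x_a x_b · e_{r-2}(rest)` changes, and it grows) and strictly decreases `∑ xᵢ²`. Hence a point of
the compact set `{y ∈ simplex | e_r(y) ≥ e_r(x)}` minimising `∑ yᵢ²` has equal coordinates, i.e.
it is the uniform weighting, and `e_r(x) ≤ C(t, r) / t^r`.
-/

open Finset

def esymmOn {ι R : Type*} [CommSemiring R] (s : Finset ι) (x : ι → R) (r : ℕ) : R :=
  ∑ e ∈ s.powersetCard r, ∏ i ∈ e, x i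

section esymmOn

variable {ι R : Type*} [CommSemiring R] {s : Finset ι} {x y : ι → R}

theorem esymmOn_congr (h : ∀ i ∈ s, x i = y i) (r : ℕ) : esymmOn s x r = esymmOn s y r :=
  sum_congr rfl fun _ he => prod_congr rfl fun i hi => h i ((mem_powersetCard.1 he).1 hi)

theorem esymmOn_const (s : Finset ι) (c : R) (r : ℕ) :
    esymmOn s (fun _ => c) r = (s.card.choose r : R) * c ^ r := by
  rw [esymmOn, sum_congr rfl fun _ he => by rw [prod_const, (mem_powersetCard.1 he).2],
    sum_const, card_powersetCard, nsmul_eq_mul]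

theorem esymmOn_insert [DecidableEq ι] {a : ι} (ha : a ∉ s) (x : ι → R) (m : ℕ) :
    esymmOn (insert a s) x (m + 1) = esymmOn s x (m + 1) + x a * esymmOn s x m := by
  have hdisj : Disjoint (s.powersetCard (m + 1)) ((s.powersetCard m).image (insert a)) :=
    disjoint_left.2 fun e he hf => by
      obtain ⟨g, -, rfl⟩ := mem_image.1 hf
      exact ha ((mem_powersetCard.1 he).1 (mem_insert_self a g))
  have hinj : Set.InjOn (insert a) (s.powersetCard m : Set (Finset ι)) := fun e he f hf hef => by
    have hae : a ∉ e := fun h => ha ((mem_powersetCard.1 he).1 h)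
    have haf : a ∉ f := fun h => ha ((mem_powersetCard.1 hf).1 h)
    rw [← erase_insert hae, ← erase_insert haf, hef]
  rw [esymmOn, powersetCard_succ_insert ha, sum_union hdisj, sum_image hinj, esymmOn, esymmOn,
    mul_sum]
  congr 1
  exact sum_congr rfl fun e he => prod_insert fun h => ha ((mem_powersetCard.1 he).1 h)

theorem esymmOn_insert_insert [DecidableEq ι] {a b : ι} (hab : a ≠ b) (ha : a ∉ s) (hb : b ∉ s)
    (x : ι → R) (m : ℕ) :
    esymmOn (insert a (insert b s)) x (m + 2) =
      esymmOn s x (m + 2) + (x a + x b) * esymmOn s x (m + 1) + x a * x b * esymmOn s x m := by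
  have ha' : a ∉ insert b s := by simp [hab, ha]
  rw [esymmOn_insert ha', esymmOn_insert hb, esymmOn_insert hb]
  ring

end esymmOn

theorem esymmOn_nonneg {ι R : Type*} [CommSemiring R] [PartialOrder R] [IsOrderedRing R]
    {s : Finset ι} {x : ι → R} (hx : ∀ i ∈ s, 0 ≤ x i) (r : ℕ) : 0 ≤ esymmOn s x r :=
  sum_nonneg fun _ he => prod_nonneg fun i hi => hx i ((mem_powersetCard.1 he).1 hi)

theorem continuous_esymmOn {ι R : Type*} [CommSemiring R] [TopologicalSpace R]
    [IsTopologicalSemiring R] (s : Finset ι) (r : ℕ) :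
    Continuous fun x : ι → R => esymmOn s x r := by
  unfold esymmOn
  fun_prop

section averagePair

variable {ι : Type*} [DecidableEq ι] {z : ι → ℝ} {a b : ι}

noncomputable def averagePair (z : ι → ℝ) (a b : ι) : ι → ℝ :=
  Function.update (Function.update z a ((z a + z b) / 2)) b ((z a + z b) / 2)

theorem averagePair_apply_left (hab : a ≠ b) : averagePair z a b a = (z a + z b) / 2 := by
  simp [averagePair, hab]

theorem averagePair_apply_right : averagePair z a b b = (z a + z b) / 2 := by
  simp [averagePair]

theorem averagePair_apply_of_ne {i : ι} (ha : i ≠ a) (hb : i ≠ b) : averagePair z a b i = z i := by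
  simp [averagePair, ha, hb]

variable [Fintype ι]

theorem univ_eq_insert_insert (hab : a ≠ b) :
    (univ : Finset ι) = insert a (insert b ((univ.erase a).erase b)) := by
  rw [insert_erase (mem_erase.2 ⟨hab.symm, mem_univ b⟩), insert_erase (mem_univ a)]

theorem sum_eq_add_add_sum_erase_erase {M : Type*} [AddCommMonoid M] (hab : a ≠ b) (w : ι → M) :
    ∑ i, w i = w a + w b + ∑ i ∈ (univ.erase a).erase b, w i := by
  rw [univ_eq_insert_insert hab, sum_insert (by simp [hab]), sum_insert (by simp), add_assoc]
  simp [hab]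

theorem averagePair_eqOn_erase_erase :
    ∀ i ∈ (univ.erase a).erase b, averagePair z a b i = z i := fun i hi => by
  obtain ⟨hib, hia, -⟩ := mem_erase.1 hi |>.imp_right mem_erase.1
  exact averagePair_apply_of_ne hia hib

theorem averagePair_mem_stdSimplex (hz : z ∈ stdSimplex ℝ ι) (hab : a ≠ b) :
    averagePair z a b ∈ stdSimplex ℝ ι := by
  refine ⟨fun i => ?_, ?_⟩
  · by_cases hia : i = a
    · subst hia; rw [averagePair_apply_left hab]; linarith [hz.1 i, hz.1 b]
    by_cases hib : i = b
    · subst hib; rw [averagePair_apply_right]; linarith [hz.1 i, hz.1 a]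
    rw [averagePair_apply_of_ne hia hib]; exact hz.1 i
  · rw [sum_eq_add_add_sum_erase_erase hab, averagePair_apply_left hab, averagePair_apply_right,
      sum_congr rfl averagePair_eqOn_erase_erase, ← hz.2, sum_eq_add_add_sum_erase_erase hab z]
    ring

theorem sum_sq_averagePair_lt (hab : z a ≠ z b) :
    ∑ i, averagePair z a b i ^ 2 < ∑ i, z i ^ 2 := by
  have hne : a ≠ b := fun h => hab (congrArg z h)
  rw [sum_eq_add_add_sum_erase_erase hne, averagePair_apply_left hne, averagePair_apply_right,
    sum_congr rfl fun i hi => by rw [averagePair_eqOn_erase_erase i hi],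
    sum_eq_add_add_sum_erase_erase hne (fun i => z i ^ 2)]
  have : 0 < (z a - z b) ^ 2 := sq_pos_of_ne_zero (sub_ne_zero.2 hab)
  nlinarith

theorem esymmOn_le_averagePair (hz : ∀ i, 0 ≤ z i) (hab : a ≠ b) (m : ℕ) :
    esymmOn univ z (m + 2) ≤ esymmOn univ (averagePair z a b) (m + 2) := by
  have ha : a ∉ (univ.erase a).erase b := by simp
  have hb : b ∉ (univ.erase a).erase b := by simp
  rw [univ_eq_insert_insert hab, esymmOn_insert_insert hab ha hb,
    esymmOn_insert_insert hab ha hb, averagePair_apply_left hab, averagePair_apply_right]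
  simp only [esymmOn_congr averagePair_eqOn_erase_erase]
  -- averaging keeps `z a + z b` and can only increase `z a * z b`
  have hC := esymmOn_nonneg (fun i _ => hz i) (s := (univ.erase a).erase b) m
  nlinarith [mul_nonneg (sq_nonneg (z a - z b)) hC]

end averagePair

section stdSimplex

variable {ι : Type*} [Fintype ι]

theorem eq_const_inv_card_of_mem_stdSimplex {z : ι → ℝ} (hz : z ∈ stdSimplex ℝ ι)
    (hconst : ∀ a b, z a = z b) : z = fun _ => (Fintype.card ι : ℝ)⁻¹ := by
  funext a
  have hsum : (Fintype.card ι : ℝ) * z a = 1 := by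
    rw [← hz.2, sum_congr rfl fun b _ => hconst b a, sum_const, card_univ, nsmul_eq_mul]
  exact eq_inv_of_mul_eq_one_right hsum

theorem esymmOn_univ_le_uniform {x : ι → ℝ} (hx : x ∈ stdSimplex ℝ ι) (m : ℕ) :
    esymmOn univ x (m + 2) ≤ esymmOn univ (fun _ : ι => (Fintype.card ι : ℝ)⁻¹) (m + 2) := by
  classical
  set K := stdSimplex ℝ ι ∩ {y | esymmOn univ x (m + 2) ≤ esymmOn univ y (m + 2)}
  have hK : IsCompact K :=
    (isCompact_stdSimplex ℝ ι).inter_right (isClosed_le continuous_const (continuous_esymmOn _ _))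
  obtain ⟨z, hzK, hzmin⟩ := hK.exists_isMinOn ⟨x, hx, Set.mem_ofPred.2 le_rfl⟩
    (f := fun y : ι → ℝ => ∑ i, y i ^ 2) (by fun_prop)
  have hconst : ∀ a b, z a = z b := by
    by_contra! ⟨a, b, hab⟩
    have hne : a ≠ b := fun h => hab (congrArg z h)
    have hyK : averagePair z a b ∈ K :=
      ⟨averagePair_mem_stdSimplex hzK.1 hne,
        hzK.2.trans (esymmOn_le_averagePair hzK.1.1 hne m)⟩
    exact (sum_sq_averagePair_lt hab).not_ge (hzmin hyK)
  rw [← eq_const_inv_card_of_mem_stdSimplex hzK.1 hconst]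
  exact hzK.2

end stdSimplex

theorem isLegal_iff_mem_stdSimplex {n : ℕ} {x : Fin n → ℝ} :
    isLegal x ↔ x ∈ stdSimplex ℝ (Fin n) :=
  and_comm

theorem isLegal_const_inv {t : ℕ} (ht : t ≠ 0) : isLegal (fun _ : Fin t => (t : ℝ)⁻¹) := by
  refine ⟨?_, fun _ => by positivity⟩
  rw [sum_const, card_univ, Fintype.card_fin, nsmul_eq_mul, mul_inv_cancel₀ (by exact_mod_cast ht)]

theorem lagrangian_eq_of_forall_lagPoly_le {n : ℕ} {E : Finset (Finset (Fin n))} {x : Fin n → ℝ}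
    (hx : isLegal x) (hmax : ∀ y, isLegal y → lagPoly E y ≤ lagPoly E x) :
    lagrangian E = lagPoly E x :=
  IsGreatest.csSup_eq ⟨⟨x, hx, rfl⟩, by rintro _ ⟨y, hy, rfl⟩; exact hmax y hy⟩

theorem lagPoly_completeEdges_insert_one {t r : ℕ} (hr : r ≠ 1) (x : Fin t → ℝ) :
    lagPoly (completeEdges t {1, r}) x = ∑ i, x i + r.factorial * esymmOn univ x r := by
  have hedges : completeEdges t {1, r} = univ.powersetCard 1 ∪ univ.powersetCard r := by
    ext e
    simp [completeEdges, mem_powersetCard]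
  have hdisj : Disjoint (univ.powersetCard 1) (univ.powersetCard r : Finset (Finset (Fin t))) :=
    disjoint_left.2 fun e h1 hr' =>
      hr ((mem_powersetCard.1 hr').2.symm.trans (mem_powersetCard.1 h1).2)
  rw [lagPoly, hedges, sum_union hdisj, powersetCard_one, sum_map, esymmOn, mul_sum]
  congr 1
  · simp
  · exact sum_congr rfl fun e he => by rw [(mem_powersetCard.1 he).2]

theorem factorial_mul_choose_mul_inv_pow {t r : ℕ} (ht : t ≠ 0) (hr : r ≠ 0) :
    (r.factorial : ℝ) * ((t.choose r : ℝ) * (t : ℝ)⁻¹ ^ r) =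
      (∏ i ∈ Icc 1 (r - 1), ((t : ℝ) - i)) / (t : ℝ) ^ (r - 1) := by
  have hdesc : (r.factorial : ℝ) * t.choose r = ∏ i ∈ range r, ((t : ℝ) - i) := by
    rw [← Nat.cast_mul, ← Nat.descFactorial_eq_factorial_mul_choose,
      ← descPochhammer_eval_eq_descFactorial, descPochhammer_eval_eq_prod_range]
  obtain ⟨k, rfl⟩ := Nat.exists_eq_add_one_of_ne_zero hr
  have ht' : (t : ℝ) ≠ 0 := by exact_mod_cast ht
  rw [← mul_assoc, hdesc, prod_range_eq_mul_Ico _ k.succ_pos, Nat.succ_eq_add_one,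
    Finset.Ico_add_one_right_eq_Icc, Nat.add_sub_cancel, Nat.cast_zero, sub_zero, inv_pow,
    pow_succ, mul_inv, div_eq_mul_inv]
  field_simp

/-- The Lagrangian of the complete {1,r}-graph on t vertices, attained by the uniform weighting. -/
theorem lagrangian_complete_one_r (t r : ℕ) (ht : 1 ≤ t) (hr : 2 ≤ r) :
    lagrangian (completeEdges t ({1, r} : Finset ℕ)) =
      1 + (∏ i ∈ Finset.Icc 1 (r - 1), ((t : ℝ) - (i : ℝ))) / (t : ℝ) ^ (r - 1) ∧
    isLegal (fun _ : Fin t => 1 / (t : ℝ)) ∧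
    lagPoly (completeEdges t ({1, r} : Finset ℕ)) (fun _ : Fin t => 1 / (t : ℝ)) =
      1 + (∏ i ∈ Finset.Icc 1 (r - 1), ((t : ℝ) - (i : ℝ))) / (t : ℝ) ^ (r - 1) := by
  simp_rw [one_div]
  have ht0 : t ≠ 0 := by omega
  have hlegal := isLegal_const_inv ht0
  have hvalue : lagPoly (completeEdges t {1, r}) (fun _ : Fin t => (t : ℝ)⁻¹) =
      1 + (∏ i ∈ Icc 1 (r - 1), ((t : ℝ) - i)) / (t : ℝ) ^ (r - 1) := by
    rw [lagPoly_completeEdges_insert_one (by omega), hlegal.1, esymmOn_const, card_univ,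
      Fintype.card_fin, factorial_mul_choose_mul_inv_pow ht0 (by omega)]
  refine ⟨?_, hlegal, hvalue⟩
  rw [← hvalue]
  refine lagrangian_eq_of_forall_lagPoly_le hlegal fun y hy => ?_
  obtain ⟨m, rfl⟩ := Nat.exists_eq_add_of_le' hr
  rw [lagPoly_completeEdges_insert_one (by omega), lagPoly_completeEdges_insert_one (by omega),
    hy.1, hlegal.1]
  gcongr
  simpa only [Fintype.card_fin] using esymmOn_univ_le_uniform (isLegal_iff_mem_stdSimplex.1 hy) m
end

section
/- Let t ≥ 3 be an integer and let H be the 3-uniform hypergraph on vertex set [t+1] with edge set [t]^{(3)} ∪ { {i_1, i_2, t+1} : {i_1,i_2} ∈ [t-1]^{(2)} } ∪ { {1, t, t+1} }. Then λ(H) > λ([t]^{(3)}) = (t-1)(t-2)/(6t²). In particular, the legal weighting x with x_1 = … = x_{t-1} = 1/t and x_t = x_{t+1} = 1/(2t) satisfies λ(H, x) > λ([t]^{(3)}). -/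
/-!
For a legal weighting `x` of `[t]`, double counting gives `3 e₃(x) = ∑ᵢ xᵢ e₂(x without xᵢ)`.
By Cauchy–Schwarz, `e₂` of `t - 1` weights summing to `1 - xᵢ` is at most
`(t - 2) (1 - xᵢ)² / (2 (t - 1))`, and the tangent line of `u (1 - u)²` at `u = 1/t` bounds
`∑ᵢ xᵢ (1 - xᵢ)²` by `(1 - 1/t)²`. Hence `e₃(x) ≤ (t - 1)(t - 2)/(6t²)`, with equality at the
uniform weighting: this is `λ([t]^(3))`.

For `H` and the given weighting, with `S = [t - 1]` (weights `1/t`),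
`λ(H, x) = e₃(S) + (x_t + x_{t+1}) e₂(S) + x₁ x_t x_{t+1}`, and since `x_t + x_{t+1} = 1/t`
this is `(C(t-1, 3) + C(t-1, 2))/t³ + 1/(4t³) = λ([t]^(3)) + 1/(4t³)`.
-/

open Finset

/-- λ(G,x) = Σ_{e∈E} ∏_{i∈e} x_i for a uniform hypergraph. -/
noncomputable def lagPolyU {n : ℕ} (E : Finset (Finset (Fin n))) (x : Fin n → ℝ) : ℝ :=
  ∑ e ∈ E, ∏ i ∈ e, x i

/-- The Lagrangian λ(G): the maximum of λ(G,x) over legal weightings. -/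
noncomputable def lagrangianU {n : ℕ} (E : Finset (Finset (Fin n))) : ℝ :=
  sSup {v : ℝ | ∃ x : Fin n → ℝ, isLegal x ∧ lagPolyU E x = v}

/-- The right-hand side is the tangent line of `u (1 - u)²` at `u = a`; the gap is
`(u - a)² (2 - 2a - u)`. -/
lemma mul_one_sub_sq_le_tangent {a u : ℝ} (hu : u ≤ 2 - 2 * a) :
    u * (1 - u) ^ 2 ≤ 2 * a ^ 2 - 2 * a ^ 3 + (1 - 4 * a + 3 * a ^ 2) * u := by
  nlinarith [mul_nonneg (sq_nonneg (u - a)) (sub_nonneg.2 hu)]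

section SymmetricSums

variable {ι : Type*} (x : ι → ℝ)

lemma sum_powersetCard_prod_of_forall_eq {S : Finset ι} {a : ℝ} (hS : ∀ i ∈ S, x i = a)
    (k : ℕ) : ∑ e ∈ S.powersetCard k, ∏ i ∈ e, x i = (#S).choose k * a ^ k := by
  calc ∑ e ∈ S.powersetCard k, ∏ i ∈ e, x i = ∑ e ∈ S.powersetCard k, a ^ #e :=
        sum_congr rfl fun e he => by
          rw [prod_congr rfl fun i hi => hS i ((mem_powersetCard.1 he).1 hi), prod_const]
    _ = (#S).choose k * a ^ k := by rw [sum_powersetCard, nsmul_eq_mul]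

lemma sum_mul_one_sub_sq_le [Fintype ι] (hcard : 2 ≤ Fintype.card ι) (hsum : ∑ i, x i = 1)
    (hx : ∀ i, 0 ≤ x i) : ∑ i, x i * (1 - x i) ^ 2 ≤ (1 - 1 / (Fintype.card ι : ℝ)) ^ 2 := by
  have ht : (2 : ℝ) ≤ Fintype.card ι := by exact_mod_cast hcard
  set t : ℝ := (Fintype.card ι : ℝ)
  have hle : ∀ i, x i ≤ 2 - 2 * (1 / t) := fun i => by
    have : x i ≤ 1 := hsum ▸ single_le_sum (fun j _ => hx j) (mem_univ i)
    have : 1 / t ≤ 1 / 2 := one_div_le_one_div_of_le two_pos ht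
    linarith
  calc ∑ i, x i * (1 - x i) ^ 2
      ≤ ∑ i, (2 * (1 / t) ^ 2 - 2 * (1 / t) ^ 3 + (1 - 4 * (1 / t) + 3 * (1 / t) ^ 2) * x i) :=
        sum_le_sum fun i _ => mul_one_sub_sq_le_tangent (hle i)
    _ = (1 - 1 / t) ^ 2 := by
        rw [sum_add_distrib, sum_const, ← mul_sum, hsum, card_univ, nsmul_eq_mul]
        field_simp
        ring

variable [DecidableEq ι]

lemma sum_image_insert_powersetCard_prod {a : ι} {S : Finset ι} (ha : a ∉ S) (k : ℕ) :
    ∑ e ∈ (S.powersetCard k).image (insert a), ∏ i ∈ e, x i =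
      x a * ∑ e ∈ S.powersetCard k, ∏ i ∈ e, x i := by
  have hnot : ∀ e ∈ S.powersetCard k, a ∉ e := fun e he hae =>
    ha ((mem_powersetCard.1 he).1 hae)
  rw [sum_image fun e he f hf hef => by
    rw [← erase_insert (hnot e he), hef, erase_insert (hnot f hf)], mul_sum]
  exact sum_congr rfl fun e he => prod_insert (hnot e he)

lemma sum_powersetCard_succ_insert_prod {a : ι} {S : Finset ι} (ha : a ∉ S) (k : ℕ) :
    ∑ e ∈ (insert a S).powersetCard (k + 1), ∏ i ∈ e, x i =
      ∑ e ∈ S.powersetCard (k + 1), ∏ i ∈ e, x i +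
        x a * ∑ e ∈ S.powersetCard k, ∏ i ∈ e, x i := by
  have hdisj : Disjoint (S.powersetCard (k + 1)) ((S.powersetCard k).image (insert a)) :=
    disjoint_left.2 fun e he hae => by
      obtain ⟨p, -, rfl⟩ := mem_image.1 hae
      exact ha ((mem_powersetCard.1 he).1 (mem_insert_self a p))
  rw [powersetCard_succ_insert ha, sum_union hdisj, sum_image_insert_powersetCard_prod x ha]

lemma two_mul_sum_powersetCard_two_prod (S : Finset ι) :
    2 * ∑ e ∈ S.powersetCard 2, ∏ i ∈ e, x i = (∑ i ∈ S, x i) ^ 2 - ∑ i ∈ S, x i ^ 2 := by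
  induction S using Finset.induction with
  | empty => rw [powersetCard_eq_empty.2 (by simp)]; simp
  | insert a S ha ih =>
    rw [sum_powersetCard_succ_insert_prod x ha, sum_insert ha, sum_insert ha]
    simp only [powersetCard_one, sum_map, Function.Embedding.coeFn_mk, prod_singleton]
    linear_combination ih

lemma six_mul_sum_powersetCard_three_prod (S : Finset ι) :
    6 * ∑ e ∈ S.powersetCard 3, ∏ i ∈ e, x i =
      (∑ i ∈ S, x i) ^ 3 - 3 * (∑ i ∈ S, x i) * ∑ i ∈ S, x i ^ 2 + 2 * ∑ i ∈ S, x i ^ 3 := by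
  induction S using Finset.induction with
  | empty => rw [powersetCard_eq_empty.2 (by simp)]; simp
  | insert a S ha ih =>
    rw [sum_powersetCard_succ_insert_prod x ha, sum_insert ha, sum_insert ha, sum_insert ha]
    linear_combination ih + 3 * x a * two_mul_sum_powersetCard_two_prod x S

lemma three_mul_sum_powersetCard_three_prod (S : Finset ι) :
    3 * ∑ e ∈ S.powersetCard 3, ∏ i ∈ e, x i =
      ∑ i ∈ S, x i * ∑ e ∈ (S.erase i).powersetCard 2, ∏ j ∈ e, x j := by
  have hterm : ∀ i ∈ S, 2 * (x i * ∑ e ∈ (S.erase i).powersetCard 2, ∏ j ∈ e, x j) =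
      (∑ j ∈ S, x j) ^ 2 * x i - 2 * (∑ j ∈ S, x j) * x i ^ 2 - (∑ j ∈ S, x j ^ 2) * x i +
        2 * x i ^ 3 := by
    intro i hi
    rw [mul_left_comm, two_mul_sum_powersetCard_two_prod, sum_erase_eq_sub hi,
      sum_erase_eq_sub hi]
    ring
  have hsum := sum_congr rfl hterm
  simp only [sum_add_distrib, sum_sub_distrib, ← mul_sum] at hsum
  linear_combination (1 / 2 : ℝ) * (six_mul_sum_powersetCard_three_prod x S - hsum)

lemma two_mul_card_mul_sum_powersetCard_two_prod_le (S : Finset ι) :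
    2 * #S * ∑ e ∈ S.powersetCard 2, ∏ i ∈ e, x i ≤ (#S - 1) * (∑ i ∈ S, x i) ^ 2 := by
  linear_combination (#S : ℝ) * two_mul_sum_powersetCard_two_prod x S +
    sq_sum_le_card_mul_sum_sq (s := S) (f := x)

lemma sum_powersetCard_three_prod_le [Fintype ι] (hcard : 2 ≤ Fintype.card ι)
    (hsum : ∑ i, x i = 1) (hx : ∀ i, 0 ≤ x i) :
    ∑ e ∈ univ.powersetCard 3, ∏ i ∈ e, x i ≤
      ((Fintype.card ι : ℝ) - 1) * ((Fintype.card ι : ℝ) - 2) / (6 * (Fintype.card ι : ℝ) ^ 2) := by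
  have ht : (2 : ℝ) ≤ Fintype.card ι := by exact_mod_cast hcard
  set t : ℝ := (Fintype.card ι : ℝ)
  have hlink : ∀ i, 2 * (t - 1) * ∑ e ∈ (univ.erase i).powersetCard 2, ∏ j ∈ e, x j ≤
      (t - 2) * (1 - x i) ^ 2 := fun i => by
    have h := two_mul_card_mul_sum_powersetCard_two_prod_le x (univ.erase i)
    rw [card_erase_of_mem (mem_univ i), card_univ, Nat.cast_pred (by omega),
      sum_erase_eq_sub (mem_univ i), hsum] at h
    linarith
  have h6 : 6 * (t - 1) * ∑ e ∈ univ.powersetCard 3, ∏ i ∈ e, x i ≤ (t - 2) * (1 - 1 / t) ^ 2 :=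
    calc 6 * (t - 1) * ∑ e ∈ univ.powersetCard 3, ∏ i ∈ e, x i
        = 2 * (t - 1) * (3 * ∑ e ∈ univ.powersetCard 3, ∏ i ∈ e, x i) := by ring
      _ = ∑ i, x i * (2 * (t - 1) * ∑ e ∈ (univ.erase i).powersetCard 2, ∏ j ∈ e, x j) := by
          rw [three_mul_sum_powersetCard_three_prod, mul_sum]
          exact sum_congr rfl fun i _ => by ring
      _ ≤ ∑ i, x i * ((t - 2) * (1 - x i) ^ 2) :=
          sum_le_sum fun i _ => mul_le_mul_of_nonneg_left (hlink i) (hx i)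
      _ = (t - 2) * ∑ i, x i * (1 - x i) ^ 2 := by
          rw [mul_sum]; exact sum_congr rfl fun i _ => by ring
      _ ≤ (t - 2) * (1 - 1 / t) ^ 2 :=
          mul_le_mul_of_nonneg_left (sum_mul_one_sub_sq_le x hcard hsum hx) (by linarith)
  rw [le_div_iff₀ (by positivity)]
  have ht0 : t ≠ 0 := by positivity
  refine le_of_mul_le_mul_left ?_ (show 0 < t - 1 by linarith)
  calc (t - 1) * ((∑ e ∈ univ.powersetCard 3, ∏ i ∈ e, x i) * (6 * t ^ 2))
      = t ^ 2 * (6 * (t - 1) * ∑ e ∈ univ.powersetCard 3, ∏ i ∈ e, x i) := by ring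
    _ ≤ t ^ 2 * ((t - 2) * (1 - 1 / t) ^ 2) := by gcongr
    _ = (t - 1) * ((t - 1) * (t - 2)) := by field_simp

end SymmetricSums

section ExtendedClique

variable {ι : Type*} [DecidableEq ι]

def extendedClique (S : Finset ι) (a b c : ι) : Finset (Finset ι) :=
  (insert a S).powersetCard 3 ∪ (S.powersetCard 2).image (insert b) ∪ {{c, a, b}}

lemma sum_prod_extendedClique (x : ι → ℝ) {S : Finset ι} {a b c : ι} (ha : a ∉ S)
    (hb : b ∉ insert a S) (hca : c ≠ a) (hcb : c ≠ b) :
    ∑ e ∈ extendedClique S a b c, ∏ i ∈ e, x i =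
      ∑ e ∈ S.powersetCard 3, ∏ i ∈ e, x i +
        (x a + x b) * ∑ e ∈ S.powersetCard 2, ∏ i ∈ e, x i + x c * x a * x b := by
  have hab : a ≠ b := fun h => hb (h ▸ mem_insert_self a S)
  have hb_of_image : ∀ e ∈ (S.powersetCard 2).image (insert b), b ∈ e := by
    simp only [mem_image]
    rintro _ ⟨p, -, rfl⟩
    exact mem_insert_self b p
  have hb_of_clique : ∀ e ∈ (insert a S).powersetCard 3, b ∉ e := fun e he hbe =>
    hb ((mem_powersetCard.1 he).1 hbe)
  have hdisj : Disjoint ((insert a S).powersetCard 3) ((S.powersetCard 2).image (insert b)) :=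
    disjoint_left.2 fun e he he' => hb_of_clique e he (hb_of_image e he')
  have hextra : {c, a, b} ∉ (insert a S).powersetCard 3 ∪ (S.powersetCard 2).image (insert b) := by
    rw [mem_union, not_or]
    refine ⟨fun h => hb_of_clique _ h (by simp), fun h => ?_⟩
    obtain ⟨p, hp, hcab⟩ := mem_image.1 h
    have hap : a ∈ insert b p := hcab ▸ by simp
    exact ha ((mem_powersetCard.1 hp).1 ((mem_insert.1 hap).resolve_left hab))
  rw [extendedClique, sum_union (disjoint_singleton_right.2 hextra), sum_union hdisj,
    sum_singleton, sum_powersetCard_succ_insert_prod x ha, sum_image_insert_powersetCard_prod x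
      (fun h => hb (mem_insert_of_mem h)), prod_insert (by simp [hca, hcb]),
    prod_insert (by simp [hab]), prod_singleton]
  ring

lemma filter_card_eq_and_forall_mem_eq_powersetCard [Fintype ι] (p : ι → Prop)
    [DecidablePred p] (k : ℕ) :
    univ.filter (fun e : Finset ι => #e = k ∧ ∀ v ∈ e, p v) = (univ.filter p).powersetCard k := by
  ext e
  simp [mem_powersetCard, subset_iff, and_comm]

lemma filter_card_eq_and_mem_and_forall_mem_erase_eq_image [Fintype ι] (p : ι → Prop)
    [DecidablePred p] {a : ι} (ha : ¬ p a) (k : ℕ) :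
    univ.filter (fun e : Finset ι => #e = k + 1 ∧ a ∈ e ∧ ∀ v ∈ e.erase a, p v) =
      ((univ.filter p).powersetCard k).image (insert a) := by
  ext e
  simp only [mem_filter, mem_univ, true_and, mem_image, mem_powersetCard, subset_iff]
  constructor
  · rintro ⟨hcard, hae, hp⟩
    exact ⟨e.erase a, ⟨hp,
      by rw [card_erase_of_mem hae, hcard, Nat.add_sub_cancel]⟩, insert_erase hae⟩
  · rintro ⟨q, ⟨hq, hcard⟩, rfl⟩
    have haq : a ∉ q := fun h => ha (hq h)
    refine ⟨by rw [card_insert_of_notMem haq, hcard], mem_insert_self a q, fun v hv => ?_⟩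
    rw [erase_insert haq] at hv
    exact hq hv

end ExtendedClique

section Lagrangian

variable {n : ℕ} (E : Finset (Finset (Fin n)))

lemma bddAbove_lagPolyU_legal :
    BddAbove {v : ℝ | ∃ x : Fin n → ℝ, isLegal x ∧ lagPolyU E x = v} := by
  refine ⟨#E, ?_⟩
  rintro _ ⟨x, ⟨hsum, hx⟩, rfl⟩
  calc lagPolyU E x ≤ ∑ _e ∈ E, (1 : ℝ) :=
        sum_le_sum fun e _ => prod_le_one (fun i _ => hx i) fun i _ =>
          hsum ▸ single_le_sum (fun j _ => hx j) (mem_univ i)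
    _ = #E := by simp

lemma lagPolyU_le_lagrangianU {x : Fin n → ℝ} (hx : isLegal x) : lagPolyU E x ≤ lagrangianU E :=
  le_csSup (bddAbove_lagPolyU_legal E) ⟨x, hx, rfl⟩

lemma lagrangianU_eq_of_forall_le {x₀ : Fin n → ℝ} (hx₀ : isLegal x₀)
    (h : ∀ x, isLegal x → lagPolyU E x ≤ lagPolyU E x₀) : lagrangianU E = lagPolyU E x₀ :=
  IsGreatest.csSup_eq ⟨⟨x₀, hx₀, rfl⟩, by rintro _ ⟨x, hx, rfl⟩; exact h x hx⟩

end Lagrangian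

lemma Nat.cast_choose_three (t : ℕ) : (t.choose 3 : ℝ) = t * (t - 1) * (t - 2) / 6 := by
  induction t with
  | zero => simp
  | succ t ih =>
    rw [Nat.choose_succ_succ', Nat.cast_add, ih, Nat.cast_choose_two]
    push_cast
    ring

lemma completeEdges_three (t : ℕ) :
    completeEdges t {3} = (univ : Finset (Fin t)).powersetCard 3 := by
  ext e
  simp [completeEdges, mem_powersetCard]

theorem lagrangianU_completeEdges_three {t : ℕ} (ht : 2 ≤ t) :
    lagrangianU (completeEdges t {3}) = ((t : ℝ) - 1) * ((t : ℝ) - 2) / (6 * (t : ℝ) ^ 2) := by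
  have ht0 : (t : ℝ) ≠ 0 := by positivity
  have huniform : isLegal (fun _ : Fin t => 1 / (t : ℝ)) :=
    ⟨by simp [ht0], fun _ => by positivity⟩
  have hvalue : lagPolyU (completeEdges t {3}) (fun _ : Fin t => 1 / (t : ℝ)) =
      ((t : ℝ) - 1) * ((t : ℝ) - 2) / (6 * (t : ℝ) ^ 2) := by
    rw [lagPolyU, completeEdges_three, sum_powersetCard_prod_of_forall_eq _ (fun _ _ => rfl),
      card_univ, Fintype.card_fin, Nat.cast_choose_three]
    field_simp
  rw [lagrangianU_eq_of_forall_le _ huniform, hvalue]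
  rintro x ⟨hsum, hx⟩
  rw [hvalue, lagPolyU, completeEdges_three]
  simpa using sum_powersetCard_three_prod_le x (by simpa using ht) hsum hx

/-- The hypergraph `H`: the paper's vertex `i ≤ t` is `⟨i - 1, _⟩` and `t + 1` is `Fin.last t`. -/
def cliquePlusEdges (t : ℕ) : Finset (Finset (Fin (t + 1))) :=
  (univ.filter fun e : Finset (Fin (t + 1)) => #e = 3 ∧ ∀ v ∈ e, (v : ℕ) < t) ∪
    (univ.filter fun e : Finset (Fin (t + 1)) =>
      #e = 3 ∧ Fin.last t ∈ e ∧ ∀ v ∈ e.erase (Fin.last t), (v : ℕ) < t - 1) ∪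
    {{⟨0, by omega⟩, ⟨t - 1, by omega⟩, Fin.last t}}

noncomputable def cliquePlusEdgesWeight (t : ℕ) : Fin (t + 1) → ℝ :=
  fun v => if (v : ℕ) < t - 1 then 1 / (t : ℝ) else 1 / (2 * (t : ℝ))

lemma cliquePlusEdges_eq_extendedClique {t : ℕ} (ht : 1 ≤ t) :
    cliquePlusEdges t = extendedClique (univ.filter fun v : Fin (t + 1) => (v : ℕ) < t - 1)
      ⟨t - 1, by omega⟩ (Fin.last t) ⟨0, by omega⟩ := by
  have hclique : univ.filter (fun v : Fin (t + 1) => (v : ℕ) < t) =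
      insert ⟨t - 1, by omega⟩ (univ.filter fun v : Fin (t + 1) => (v : ℕ) < t - 1) := by
    ext v
    simp only [mem_filter, mem_univ, true_and, mem_insert, Fin.ext_iff]
    omega
  have hpairs := filter_card_eq_and_mem_and_forall_mem_erase_eq_image
    (fun v : Fin (t + 1) => (v : ℕ) < t - 1) (a := Fin.last t) (by simp) 2
  simp only [Nat.reduceAdd] at hpairs
  rw [cliquePlusEdges, extendedClique, ← hclique, hpairs]
  congr 2
  convert filter_card_eq_and_forall_mem_eq_powersetCard (fun v : Fin (t + 1) => (v : ℕ) < t) 3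

lemma isLegal_cliquePlusEdgesWeight {t : ℕ} (ht : 1 ≤ t) :
    isLegal (cliquePlusEdgesWeight t) := by
  refine ⟨?_, fun v => by unfold cliquePlusEdgesWeight; split_ifs <;> positivity⟩
  have hlow : #(univ.filter fun v : Fin (t + 1) => (v : ℕ) < t - 1) = t - 1 := by
    rw [Fin.card_filter_val_lt]; omega
  have hhigh : #(univ.filter fun v : Fin (t + 1) => ¬ (v : ℕ) < t - 1) = 2 := by
    have := card_filter_add_card_filter_not (s := univ)
      (p := fun v : Fin (t + 1) => (v : ℕ) < t - 1)
    rw [card_univ, Fintype.card_fin, hlow] at this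
    omega
  unfold cliquePlusEdgesWeight
  rw [sum_ite, sum_const, sum_const, hlow, hhigh, nsmul_eq_mul,
    nsmul_eq_mul, Nat.cast_pred ht]
  field_simp
  ring

lemma lagPolyU_cliquePlusEdges {t : ℕ} (ht : 2 ≤ t) :
    lagPolyU (cliquePlusEdges t) (cliquePlusEdgesWeight t) =
      ((t : ℝ) - 1) * ((t : ℝ) - 2) / (6 * (t : ℝ) ^ 2) + 1 / (4 * (t : ℝ) ^ 3) := by
  set S := univ.filter fun v : Fin (t + 1) => (v : ℕ) < t - 1
  have hS : ∀ v ∈ S, cliquePlusEdgesWeight t v = 1 / t := fun v hv =>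
    if_pos (mem_filter.1 hv).2
  have hcard : #S = t - 1 := by rw [Fin.card_filter_val_lt]; omega
  rw [lagPolyU, cliquePlusEdges_eq_extendedClique (by omega), sum_prod_extendedClique _
      (by simp) (by simp [Fin.ext_iff]; omega) (by simp [Fin.ext_iff]; omega)
      (by simp [Fin.ext_iff]; omega),
    sum_powersetCard_prod_of_forall_eq _ hS, sum_powersetCard_prod_of_forall_eq _ hS, hcard,
    Nat.cast_choose_three, Nat.cast_choose_two]
  simp only [cliquePlusEdgesWeight, Fin.val_last, if_pos (show 0 < t - 1 by omega),
    if_neg (show ¬ t < t - 1 by omega), lt_irrefl, if_false]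
  push_cast [Nat.cast_sub (show 1 ≤ t by omega)]
  field_simp
  ring

/-- The example after Theorem 4: the 3-graph on [t+1] with edges [t]^(3), all {i₁,i₂,t+1} with
{i₁,i₂} ⊆ [t-1], and {1,t,t+1}, has Lagrangian strictly larger than λ([t]^(3)). -/
theorem clique_plus_edges_exceeds (t : ℕ) (ht : 3 ≤ t)
    (E : Finset (Finset (Fin (t + 1))))
    (hE : E =
      (Finset.univ.filter (fun e : Finset (Fin (t + 1)) =>
        e.card = 3 ∧ ∀ v ∈ e, (v : ℕ) < t)) ∪
      (Finset.univ.filter (fun e : Finset (Fin (t + 1)) =>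
        e.card = 3 ∧ Fin.last t ∈ e ∧ ∀ v ∈ e.erase (Fin.last t), (v : ℕ) < t - 1)) ∪
      {({⟨0, by omega⟩, ⟨t - 1, by omega⟩, Fin.last t} : Finset (Fin (t + 1)))}) :
    lagrangianU E > lagrangianU (completeEdges t ({3} : Finset ℕ)) ∧
    lagrangianU (completeEdges t ({3} : Finset ℕ)) =
      ((t : ℝ) - 1) * ((t : ℝ) - 2) / (6 * (t : ℝ) ^ 2) ∧
    isLegal (fun v : Fin (t + 1) =>
      if (v : ℕ) < t - 1 then 1 / (t : ℝ) else 1 / (2 * (t : ℝ))) ∧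
    lagPolyU E (fun v : Fin (t + 1) =>
        if (v : ℕ) < t - 1 then 1 / (t : ℝ) else 1 / (2 * (t : ℝ))) >
      lagrangianU (completeEdges t ({3} : Finset ℕ)) := by
  have hH : E = cliquePlusEdges t := hE
  have hK := lagrangianU_completeEdges_three (show 2 ≤ t by omega)
  have hlegal := isLegal_cliquePlusEdgesWeight (show 1 ≤ t by omega)
  have hexceeds : lagPolyU E (cliquePlusEdgesWeight t) > lagrangianU (completeEdges t {3}) := by
    rw [hH, lagPolyU_cliquePlusEdges (by omega), hK]
    have : (0 : ℝ) < 1 / (4 * (t : ℝ) ^ 3) := by positivity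
    linarith
  exact ⟨hexceeds.trans_le (lagPolyU_le_lagrangianU E hlegal), hK, hlegal, hexceeds⟩
end

section
/- Let s ≥ 4 and n ≥ s be integers, and let G be a {1,3}-graph on vertex set [n] whose singleton edges are exactly {1}, {2}, {3} and whose 3-uniform edge set E³ contains all 3-element subsets of [s]. Then λ'(G) > 1 + 2/9 = λ'(K_3^{{1,3}}). In particular, the legal weighting with x_1 = x_2 = x_3 = 0.333, x_4 = … = x_s = 0.001/(s-3), and x_{s+1} = … = x_n = 0 witnesses this strict inequality. -/
/-!
On `K_3^{1,3}` the polynomial is `x₁ + x₂ + x₃ + 6 x₁x₂x₃`, maximised by the uniform weighting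
(AM-GM), with value `1 + 2/9`. In `G`, take weight `a = (1 - β)/3` on the vertices `1, 2, 3` and
spread a small mass `β` over the vertices `4, …, s`. The singletons lose `β` and the triangle
`{1,2,3}` loses about `2β/3`, but the triples formed by two of `1, 2, 3` and one light vertex
contribute `6 · 3a² · β ≈ 2β`; to first order the net gain is `β/3 > 0`. The weighting of the
statement is the case `β = 0.001`.
-/

open Finset

open scoped Nat

section Lagrangian

variable {n : ℕ}

lemma lagPoly_le_of_subset {F E : Finset (Finset (Fin n))} (hFE : F ⊆ E) {x : Fin n → ℝ}
    (hx : ∀ i, 0 ≤ x i) : lagPoly F x ≤ lagPoly E x :=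
  sum_le_sum_of_subset_of_nonneg hFE fun _ _ _ =>
    mul_nonneg (by positivity) (prod_nonneg fun i _ => hx i)

lemma lagPoly_of_forall_card_eq {F : Finset (Finset (Fin n))} {k : ℕ} (hF : ∀ e ∈ F, #e = k)
    (x : Fin n → ℝ) : lagPoly F x = k ! * ∑ e ∈ F, ∏ i ∈ e, x i := by
  rw [lagPoly, mul_sum]
  exact sum_congr rfl fun e he => by rw [hF e he]

lemma bddAbove_lagPoly_legal (E : Finset (Finset (Fin n))) :
    BddAbove {v : ℝ | ∃ x : Fin n → ℝ, isLegal x ∧ lagPoly E x = v} := by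
  refine ⟨∑ e ∈ E, ((#e)! : ℝ), ?_⟩
  rintro _ ⟨x, ⟨hsum, hnn⟩, rfl⟩
  have hx1 (i : Fin n) : x i ≤ 1 := hsum ▸ single_le_sum (fun j _ => hnn j) (mem_univ i)
  refine sum_le_sum fun e _ => ?_
  calc ((#e)! : ℝ) * ∏ i ∈ e, x i ≤ (#e)! * 1 := by
        gcongr
        exact prod_le_one (fun i _ => hnn i) fun i _ => hx1 i
    _ = (#e)! := mul_one _

lemma lagPoly_le_lagrangian (E : Finset (Finset (Fin n))) {x : Fin n → ℝ} (hx : isLegal x) :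
    lagPoly E x ≤ lagrangian E :=
  le_csSup (bddAbove_lagPoly_legal E) ⟨x, hx, rfl⟩

end Lagrangian

lemma lagPoly_completeEdges_three (x : Fin 3 → ℝ) :
    lagPoly (completeEdges 3 {1, 3}) x = x 0 + x 1 + x 2 + 6 * (x 0 * x 1 * x 2) := by
  have hK : completeEdges 3 {1, 3} = {{0}, {1}, {2}, univ} := by decide
  simp [hK, lagPoly, Fin.prod_univ_three, Nat.factorial, add_assoc]

lemma lagrangian_completeEdges_three : lagrangian (completeEdges 3 {1, 3}) = 1 + 2 / 9 := by
  have hcenter : isLegal (fun _ : Fin 3 => (1 / 3 : ℝ)) :=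
    ⟨by simp, fun _ => by norm_num⟩
  refine le_antisymm (csSup_le ⟨_, _, hcenter, rfl⟩ ?_) ?_
  · rintro _ ⟨x, ⟨hsum, hnn⟩, rfl⟩
    rw [Fin.sum_univ_three] at hsum
    rw [lagPoly_completeEdges_three]
    have h0 := hnn 0; have h1 := hnn 1; have h2 := hnn 2
    nlinarith [sq_nonneg (x 0 - x 1), sq_nonneg (x 1 - x 2), sq_nonneg (x 0 - x 2),
      mul_nonneg h0 h1, mul_nonneg h1 h2, mul_nonneg h0 h2]
  · refine (le_of_eq ?_).trans (lagPoly_le_lagrangian _ hcenter)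
    rw [lagPoly_completeEdges_three]
    norm_num

section Cone

variable {α β : Type*} [CommSemiring β]

lemma sum_prod_image_insert [DecidableEq α] {P : Finset (Finset α)} {A : Finset α}
    (hPA : ∀ p ∈ P, Disjoint p A) (f : α → β) :
    ∑ e ∈ (P ×ˢ A).image (fun q => insert q.2 q.1), ∏ i ∈ e, f i =
      (∑ p ∈ P, ∏ i ∈ p, f i) * ∑ v ∈ A, f v := by
  have hnotMem {p v} (hp : p ∈ P) (hv : v ∈ A) : v ∉ p := disjoint_right.1 (hPA p hp) hv
  rw [sum_image, sum_mul_sum, sum_product]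
  · exact sum_congr rfl fun p hp => sum_congr rfl fun v hv => by
      rw [prod_insert (hnotMem hp hv), mul_comm]
  · rintro ⟨p, v⟩ hpv ⟨p', v'⟩ hpv' (h : insert v p = insert v' p')
    simp only [coe_product, Set.mem_prod, mem_coe] at hpv hpv'
    have hvv' : v = v' := by
      have : v ∈ insert v' p' := h ▸ mem_insert_self v p
      exact (mem_insert.1 this).resolve_right (hnotMem hpv'.1 hpv.2)
    subst hvv'
    rw [← erase_insert (hnotMem hpv.1 hpv.2), h, erase_insert (hnotMem hpv'.1 hpv'.2)]

lemma sum_powersetCard_prod_of_eqOn {T : Finset α} {f : α → β} {a : β}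
    (hf : ∀ i ∈ T, f i = a) (k : ℕ) :
    ∑ p ∈ T.powersetCard k, ∏ i ∈ p, f i = (#T).choose k * a ^ k := by
  rw [sum_congr rfl fun p hp => ?_, sum_const, card_powersetCard, nsmul_eq_mul]
  obtain ⟨hpT, hpk⟩ := mem_powersetCard.1 hp
  rw [prod_congr rfl fun i hi => hf i (hpT hi), prod_const, hpk]

end Cone

def initialVertices (n m : ℕ) : Finset (Fin n) := {v | (v : ℕ) < m}

section InitialVertices

variable {n m k : ℕ}

@[simp]
lemma mem_initialVertices {v : Fin n} : v ∈ initialVertices n m ↔ (v : ℕ) < m := by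
  simp [initialVertices]

lemma card_initialVertices (hmn : m ≤ n) : #(initialVertices n m) = m := by
  rw [initialVertices, Fin.card_filter_val_lt, min_eq_right hmn]

lemma initialVertices_mono (hmk : m ≤ k) : initialVertices n m ⊆ initialVertices n k :=
  fun _ hv => mem_initialVertices.2 (lt_of_lt_of_le (mem_initialVertices.1 hv) hmk)

end InitialVertices

noncomputable def perturbedWeighting (n s : ℕ) (a β : ℝ) (v : Fin n) : ℝ :=
  if (v : ℕ) < 3 then a else if (v : ℕ) < s then β / ((s : ℝ) - 3) else 0

section PerturbedWeighting

variable {n s : ℕ} {a β : ℝ}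

local notation "w" => perturbedWeighting n s a β

lemma perturbedWeighting_nonneg (ha : 0 ≤ a) (hβ : 0 ≤ β) (v : Fin n) : 0 ≤ w v := by
  unfold perturbedWeighting
  split_ifs with h3 hs
  · exact ha
  · have : (4 : ℝ) ≤ s := by exact_mod_cast (show 4 ≤ s by omega)
    exact div_nonneg hβ (by linarith)
  · exact le_rfl

lemma perturbedWeighting_of_mem_initialVertices {v : Fin n} (hv : v ∈ initialVertices n 3) :
    w v = a :=
  if_pos (mem_initialVertices.1 hv)

lemma sum_perturbedWeighting_initialVertices (hn : 3 ≤ n) :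
    ∑ v ∈ initialVertices n 3, w v = 3 * a := by
  rw [sum_congr rfl fun v => perturbedWeighting_of_mem_initialVertices, sum_const,
    card_initialVertices hn, nsmul_eq_mul, Nat.cast_ofNat]

lemma sum_perturbedWeighting_sdiff (hs : 4 ≤ s) (hn : s ≤ n) :
    ∑ v ∈ initialVertices n s \ initialVertices n 3, w v = β := by
  have hw : ∀ v ∈ initialVertices n s \ initialVertices n 3, w v = β / ((s : ℝ) - 3) := by
    intro v hv
    simp only [mem_sdiff, mem_initialVertices] at hv
    simp [perturbedWeighting, hv.1, hv.2]
  have hs3 : (s : ℝ) - 3 ≠ 0 := by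
    have : (4 : ℝ) ≤ s := by exact_mod_cast hs
    linarith
  rw [sum_congr rfl hw, sum_const, card_sdiff_of_subset (initialVertices_mono (by omega)),
    card_initialVertices hn, card_initialVertices (by omega), nsmul_eq_mul,
    Nat.cast_sub (by omega), Nat.cast_ofNat, mul_div_cancel₀ _ hs3]

lemma sum_perturbedWeighting (hs : 4 ≤ s) (hn : s ≤ n) : ∑ v, w v = 3 * a + β := by
  have hzero : ∀ v ∈ univ, v ∉ initialVertices n s → w v = 0 := by
    intro v _ hv
    rw [mem_initialVertices, not_lt] at hv
    simp [perturbedWeighting, show ¬ (v : ℕ) < 3 by omega, show ¬ (v : ℕ) < s by omega]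
  rw [← sum_subset (subset_univ _) hzero, ← sum_sdiff (initialVertices_mono (by omega : 3 ≤ s)),
    sum_perturbedWeighting_sdiff hs hn, sum_perturbedWeighting_initialVertices (by omega), add_comm]

lemma isLegal_perturbedWeighting (hs : 4 ≤ s) (hn : s ≤ n) (ha : 0 ≤ a) (hβ : 0 ≤ β)
    (hsum : 3 * a + β = 1) : isLegal w :=
  ⟨(sum_perturbedWeighting hs hn).trans hsum, perturbedWeighting_nonneg ha hβ⟩

end PerturbedWeighting

/-- The triple `{0, 1, 2}` together with the triples made of two of `0, 1, 2` and one vertex in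
`3, …, s - 1`. -/
def heavyTriples (n s : ℕ) : Finset (Finset (Fin n)) :=
  (initialVertices n 3).powersetCard 3 ∪
    ((initialVertices n 3).powersetCard 2 ×ˢ (initialVertices n s \ initialVertices n 3)).image
      fun q => insert q.2 q.1

section HeavyTriples

variable {n s : ℕ}

lemma card_of_mem_heavyTriples {e : Finset (Fin n)} (he : e ∈ heavyTriples n s) : #e = 3 := by
  simp only [heavyTriples, mem_union, mem_powersetCard, mem_image, mem_product, mem_sdiff] at he
  rcases he with ⟨-, he⟩ | ⟨⟨p, v⟩, ⟨⟨hp, hp2⟩, -, hv⟩, rfl⟩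
  · exact he
  · rw [card_insert_of_notMem fun hvp => hv (hp hvp), hp2]

lemma subset_of_mem_heavyTriples (hs : 3 ≤ s) {e : Finset (Fin n)} (he : e ∈ heavyTriples n s) :
    e ⊆ initialVertices n s := by
  simp only [heavyTriples, mem_union, mem_powersetCard, mem_image, mem_product, mem_sdiff] at he
  rcases he with ⟨he, -⟩ | ⟨⟨p, v⟩, ⟨⟨hp, -⟩, hv, -⟩, rfl⟩
  · exact he.trans (initialVertices_mono hs)
  · exact insert_subset hv (hp.trans (initialVertices_mono hs))

lemma lagPoly_perturbedWeighting_heavyTriples (hs : 4 ≤ s) (hn : s ≤ n) (a β : ℝ) :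
    lagPoly (heavyTriples n s) (perturbedWeighting n s a β) = 6 * (a ^ 3 + 3 * a ^ 2 * β) := by
  have hdisj : Disjoint ((initialVertices n 3).powersetCard 3)
      (((initialVertices n 3).powersetCard 2 ×ˢ
        (initialVertices n s \ initialVertices n 3)).image fun q => insert q.2 q.1) := by
    simp only [disjoint_left, mem_powersetCard, mem_image, mem_product, mem_sdiff, not_exists,
      not_and]
    rintro _ ⟨he, -⟩ ⟨p, v⟩ ⟨-, -, hv⟩ rfl
    exact hv (he (mem_insert_self v p))
  have hcone : ∀ p ∈ (initialVertices n 3).powersetCard 2,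
      Disjoint p (initialVertices n s \ initialVertices n 3) := fun p hp =>
    disjoint_of_subset_left (mem_powersetCard.1 hp).1 disjoint_sdiff
  have ha : ∀ v ∈ initialVertices n 3, perturbedWeighting n s a β v = a := fun v =>
    perturbedWeighting_of_mem_initialVertices
  rw [lagPoly_of_forall_card_eq (fun e => card_of_mem_heavyTriples), heavyTriples,
    sum_union hdisj, sum_prod_image_insert hcone, sum_powersetCard_prod_of_eqOn ha,
    sum_powersetCard_prod_of_eqOn ha, sum_perturbedWeighting_sdiff hs hn,
    card_initialVertices (by omega)]
  norm_num

end HeavyTriples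

lemma lagPoly_perturbedWeighting_ge {n s : ℕ} (hs : 4 ≤ s) (hn : s ≤ n) {a β : ℝ} (ha : 0 ≤ a)
    (hβ : 0 ≤ β) {E : Finset (Finset (Fin n))}
    (h3 : ∀ e : Finset (Fin n), #e = 3 → (∀ v ∈ e, (v : ℕ) < s) → e ∈ E) :
    lagPoly (E.filter (#· = 1)) (perturbedWeighting n s a β) + 6 * (a ^ 3 + 3 * a ^ 2 * β) ≤
      lagPoly E (perturbedWeighting n s a β) := by
  have hsub : heavyTriples n s ⊆ E.filter (¬ #· = 1) := fun e he => by
    have hcard := card_of_mem_heavyTriples he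
    refine mem_filter.2 ⟨h3 e hcard fun v hv => ?_, by omega⟩
    exact mem_initialVertices.1 (subset_of_mem_heavyTriples (by omega) he hv)
  rw [← lagPoly_perturbedWeighting_heavyTriples hs hn]
  calc _ ≤ lagPoly (E.filter (#· = 1)) (perturbedWeighting n s a β) +
        lagPoly (E.filter (¬ #· = 1)) (perturbedWeighting n s a β) := by
        gcongr
        exact lagPoly_le_of_subset hsub (perturbedWeighting_nonneg ha hβ)
    _ = lagPoly E (perturbedWeighting n s a β) := sum_filter_add_sum_filter_not _ _ _

/-- The counterexample for t = 3: a {1,3}-graph with exactly the singletons {1},{2},{3} and all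
3-subsets of [s] as 3-edges has Lagrangian exceeding λ'(K_3^{1,3}) = 1 + 2/9. -/
theorem counterexample_t_three (s n : ℕ) (hs : 4 ≤ s) (hn : s ≤ n)
    (E : Finset (Finset (Fin n)))
    (h1 : E.filter (fun e => e.card = 1) =
      ({{⟨0, by omega⟩}, {⟨1, by omega⟩}, {⟨2, by omega⟩}} : Finset (Finset (Fin n))))
    (h3 : ∀ e : Finset (Fin n), e.card = 3 → (∀ v ∈ e, (v : ℕ) < s) → e ∈ E) :
    lagrangian E > 1 + 2 / 9 ∧
    lagrangian (completeEdges 3 ({1, 3} : Finset ℕ)) = 1 + 2 / 9 ∧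
    isLegal (fun v : Fin n => if (v : ℕ) < 3 then (0.333 : ℝ)
      else if (v : ℕ) < s then (0.001 : ℝ) / ((s : ℝ) - 3) else 0) ∧
    lagPoly E (fun v : Fin n => if (v : ℕ) < 3 then (0.333 : ℝ)
        else if (v : ℕ) < s then (0.001 : ℝ) / ((s : ℝ) - 3) else 0) > 1 + 2 / 9 := by
  change _ ∧ _ ∧ isLegal (perturbedWeighting n s 0.333 0.001) ∧
    lagPoly E (perturbedWeighting n s 0.333 0.001) > _
  have hlegal : isLegal (perturbedWeighting n s 0.333 0.001) :=
    isLegal_perturbedWeighting hs hn (by norm_num) (by norm_num) (by norm_num)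
  have hsingletons :
      lagPoly (E.filter (#· = 1)) (perturbedWeighting n s 0.333 0.001) = 3 * 0.333 := by
    rw [h1]
    norm_num [lagPoly, perturbedWeighting]
  have hbeats : lagPoly E (perturbedWeighting n s 0.333 0.001) > 1 + 2 / 9 :=
    calc 1 + 2 / 9 < 3 * 0.333 + 6 * (0.333 ^ 3 + 3 * 0.333 ^ 2 * 0.001 : ℝ) := by norm_num
      _ = lagPoly (E.filter (#· = 1)) (perturbedWeighting n s 0.333 0.001) +
          6 * (0.333 ^ 3 + 3 * 0.333 ^ 2 * 0.001) := by rw [hsingletons]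
      _ ≤ lagPoly E (perturbedWeighting n s 0.333 0.001) :=
        lagPoly_perturbedWeighting_ge hs hn (by norm_num) (by norm_num) h3
  exact ⟨hbeats.trans_le (lagPoly_le_lagrangian E hlegal), lagrangian_completeEdges_three, hlegal,
    hbeats⟩
end
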